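/- In any model H of HST: every standard set X which is finite in the sense of the standard universe S (S-finite) satisfies X ⊆ S, i.e. all elements of X are standard; conversely, every set X of H with X ⊆ S which is finite in H is standard and S-finite. -/
import Mathlib


/-!
Semantic framework for models of Hrbaček set theory (HST) in the ∈-st-language,
following Kanovei–Reeken, "Isomorphism property in nonstandard extensions of the
ZFC universe".

A model is a type `M` together with a membership relation `mem : M → M → Prop`
and a standardness predicate `stP : M → Prop`.  Formulas of the ∈-st-language
are deeply embedded (`StFormula`), so that axiom schemata can be stated.
All set-theoretic notions (pairs, functions, ordinals, ...) are expressed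
relative to a class `C : M → Prop`, which also yields relativizations
(to the standard universe, the internal universe, inner classes, etc.).
-/

universe u v

namespace HSTF

variable {M : Type u}

def TrueC {M : Type u} : M → Prop := fun _ => True
def FalseC {M : Type u} : M → Prop := fun _ => False

/-! ### Formulas of the ∈-st-language -/

inductive StFormula : ℕ → Type where
  | mem {n} (i j : Fin n) : StFormula n
  | eq {n} (i j : Fin n) : StFormula n
  | st {n} (i : Fin n) : StFormula n
  | not {n} (φ : StFormula n) : StFormula n
  | and {n} (φ ψ : StFormula n) : StFormula n
  | all {n} (φ : StFormula (n + 1)) : StFormula n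

/-- ∈-formulas: formulas in which the standardness predicate does not occur. -/
def StFormula.IsEpsilon : ∀ {n}, StFormula n → Prop
  | _, .mem _ _ => True
  | _, .eq _ _ => True
  | _, .st _ => False
  | _, .not φ => φ.IsEpsilon
  | _, .and φ ψ => φ.IsEpsilon ∧ ψ.IsEpsilon
  | _, .all φ => φ.IsEpsilon

/-- Evaluation of a formula in `(M, mem, stP)`, with all quantifiers
relativized to the class `C`. -/
def EvalIn (mem : M → M → Prop) (stP : M → Prop) (C : M → Prop) :
    ∀ {n}, StFormula n → (Fin n → M) → Prop
  | _, .mem i j, val => mem (val i) (val j)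
  | _, .eq i j, val => val i = val j
  | _, .st i, val => stP (val i)
  | _, .not φ, val => ¬ EvalIn mem stP C φ val
  | _, .and φ ψ, val => EvalIn mem stP C φ val ∧ EvalIn mem stP C ψ val
  | _, .all φ, val => ∀ x, C x → EvalIn mem stP C φ (Fin.snoc val x)

/-! ### Set-theoretic coding, relative to a class `C` -/

section Coding
variable (mem : M → M → Prop) (C : M → Prop)

def EmptyIn (e : M) : Prop := ∀ z, C z → ¬ mem z e

def SingIn (s x : M) : Prop := ∀ z, C z → (mem z s ↔ z = x)

def UPairIn (p x y : M) : Prop := ∀ z, C z → (mem z p ↔ (z = x ∨ z = y))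

/-- `p` is the Kuratowski ordered pair `⟨x, y⟩`, relative to `C`. -/
def OPairIn (p x y : M) : Prop :=
  ∃ s t, C s ∧ C t ∧ SingIn mem C s x ∧ UPairIn mem C t x y ∧ UPairIn mem C p s t

/-- `f(x) = y` for a set-coded function `f` (a set of ordered pairs). -/
def FValIn (f x y : M) : Prop := ∃ p, C p ∧ mem p f ∧ OPairIn mem C p x y

/-- `f` is a (set-coded) function with domain exactly the class `D`. -/
def FuncOnIn (f : M) (D : M → Prop) : Prop :=
  (∀ p, C p → mem p f → ∃ x y, C x ∧ C y ∧ D x ∧ OPairIn mem C p x y) ∧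
  (∀ x, C x → D x → ∃ y, C y ∧ FValIn mem C f x y) ∧
  (∀ x y y', C x → C y → C y' → FValIn mem C f x y → FValIn mem C f x y' → y = y')

def SubIn (x y : M) : Prop := ∀ z, C z → mem z x → mem z y

def TransIn (x : M) : Prop := ∀ y, C y → mem y x → ∀ z, C z → mem z y → mem z x

/-- `s = x ∪ {x}`. -/
def SuccIn (s x : M) : Prop := ∀ z, C z → (mem z s ↔ (mem z x ∨ z = x))

/-- `∈` restricted to `x` is well-founded (in the sense of the model):
every nonempty subset (of the model, in `C`) of `x` has an `∈`-minimal element. -/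
def WFIn (x : M) : Prop :=
  ∀ Y, C Y → SubIn mem C Y x → (∃ w, C w ∧ mem w Y) →
    ∃ w, C w ∧ mem w Y ∧ ∀ u, C u → mem u w → ¬ mem u Y

/-- `x` is an ordinal: a transitive set well-ordered by `∈` (relative to `C`). -/
def OrdIn (x : M) : Prop :=
  TransIn mem C x ∧
  (∀ y z, C y → C z → mem y x → mem z x → (mem y z ∨ y = z ∨ mem z y)) ∧
  (∀ y z w, C y → C z → C w → mem y x → mem z x → mem w x → mem y z → mem z w → mem y w) ∧
  (∀ y, C y → mem y x → ¬ mem y y) ∧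
  WFIn mem C x

/-- `x` is a natural number: an ordinal such that every ordinal `≤ x`
is zero or a successor. -/
def NatIn (x : M) : Prop :=
  OrdIn mem C x ∧ ∀ y, C y → (y = x ∨ mem y x) →
    (EmptyIn mem C y ∨ ∃ z, C z ∧ SuccIn mem C y z)

/-- `x` and `y` are equinumerous via a (set-coded) bijection, relative to `C`. -/
def EquinumIn (x y : M) : Prop :=
  ∃ f, C f ∧ FuncOnIn mem C f (fun z => mem z x) ∧
    (∀ a b w, C a → C b → C w → FValIn mem C f a w → FValIn mem C f b w → a = b) ∧
    (∀ w, C w → (mem w y ↔ ∃ a, C a ∧ mem a x ∧ FValIn mem C f a w))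

def FiniteIn (x : M) : Prop := ∃ n, C n ∧ NatIn mem C n ∧ EquinumIn mem C x n

/-- `x` is a cardinal: an ordinal not equinumerous to any smaller ordinal. -/
def CardinalIn (x : M) : Prop :=
  OrdIn mem C x ∧ ∀ y, C y → mem y x → ¬ EquinumIn mem C x y

/-- The set `r` (of ordered pairs) well-orders the set `x`, relative to `C`. -/
def WOrdersIn (r x : M) : Prop :=
  (∀ a b, C a → C b → mem a x → mem b x → a ≠ b →
    ((∃ p, C p ∧ mem p r ∧ OPairIn mem C p a b) ∨ (∃ p, C p ∧ mem p r ∧ OPairIn mem C p b a))) ∧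
  (∀ a, C a → mem a x → ¬ ∃ p, C p ∧ mem p r ∧ OPairIn mem C p a a) ∧
  (∀ a b c, C a → C b → C c →
    (∃ p, C p ∧ mem p r ∧ OPairIn mem C p a b) → (∃ p, C p ∧ mem p r ∧ OPairIn mem C p b c) →
    (∃ p, C p ∧ mem p r ∧ OPairIn mem C p a c)) ∧
  (∀ Y, C Y → SubIn mem C Y x → (∃ w, C w ∧ mem w Y) →
    ∃ a, C a ∧ mem a Y ∧ ∀ b, C b → mem b Y → b ≠ a → ∃ p, C p ∧ mem p r ∧ OPairIn mem C p a b)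

def WOableIn (x : M) : Prop := ∃ r, C r ∧ WOrdersIn mem C r x

end Coding

/-! ### ZFC, relativized to a class -/

/-- The class `C` of `(M, mem)` is a model of ZFC (with the Separation and
Collection schemata for ∈-formulas, and Choice in the form of the
well-ordering principle). -/
structure ZFCModelIn (mem : M → M → Prop) (C : M → Prop) : Prop where
  nonemp : ∃ x, C x
  ext : ∀ x y, C x → C y → (∀ z, C z → (mem z x ↔ mem z y)) → x = y
  pair : ∀ x y, C x → C y → ∃ p, C p ∧ UPairIn mem C p x y
  union : ∀ x, C x → ∃ u, C u ∧ ∀ z, C z → (mem z u ↔ ∃ y, C y ∧ mem y x ∧ mem z y)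
  power : ∀ x, C x → ∃ pw, C pw ∧ ∀ z, C z → (mem z pw ↔ SubIn mem C z x)
  infinity : ∃ w, C w ∧ (∃ e, C e ∧ mem e w ∧ EmptyIn mem C e) ∧
    ∀ x, C x → mem x w → ∃ s, C s ∧ mem s w ∧ SuccIn mem C s x
  foundation : ∀ x, C x → (∃ y, C y ∧ mem y x) →
    ∃ y, C y ∧ mem y x ∧ ∀ z, C z → mem z y → ¬ mem z x
  separation : ∀ {n} (φ : StFormula (n + 1)), φ.IsEpsilon →
    ∀ val : Fin n → M, (∀ i, C (val i)) → ∀ x, C x →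
      ∃ s, C s ∧ ∀ z, C z → (mem z s ↔ mem z x ∧ EvalIn mem FalseC C φ (Fin.snoc val z))
  collection : ∀ {n} (φ : StFormula (n + 2)), φ.IsEpsilon →
    ∀ val : Fin n → M, (∀ i, C (val i)) → ∀ x, C x →
      ∃ B, C B ∧ ∀ a, C a → mem a x →
        (∃ b, C b ∧ EvalIn mem FalseC C φ (Fin.snoc (Fin.snoc val a) b)) →
        ∃ b, C b ∧ mem b B ∧ EvalIn mem FalseC C φ (Fin.snoc (Fin.snoc val a) b)
  choice_wo : ∀ x, C x → ∃ r, C r ∧ WOrdersIn mem C r x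

/-! ### HST -/

/-- `x` is internal: a member of some standard set. -/
def Internal (mem : M → M → Prop) (stP : M → Prop) (x : M) : Prop := ∃ y, stP y ∧ mem x y

/-- `x` is a set of standard size: the image of `σS = {z ∈ S : st z}`
(for some standard `S`) under some (set-coded) function. -/
def SSize (mem : M → M → Prop) (stP : M → Prop) (x : M) : Prop :=
  ∃ S f, stP S ∧ FuncOnIn mem TrueC f (fun z => stP z ∧ mem z S) ∧
    ∀ y, mem y x ↔ ∃ a, stP a ∧ mem a S ∧ FValIn mem TrueC f a y

/-- `(M, mem, stP)` is a model of Hrbaček set theory HST. -/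
structure HSTModel (mem : M → M → Prop) (stP : M → Prop) : Prop where
  /-- 1a: the standard universe models ZFC (the relativization `Φ^st` of every
  ZFC axiom `Φ`). -/
  zfc_st : ZFCModelIn mem stP
  /-- 1b: Transfer for ∈-formulas with standard parameters, between the
  standard and the internal universe. -/
  transfer : ∀ {n} (φ : StFormula (n + 1)), φ.IsEpsilon →
    ∀ val : Fin n → M, (∀ i, stP (val i)) →
      ((∃ x, Internal mem stP x ∧ EvalIn mem FalseC (Internal mem stP) φ (Fin.snoc val x)) ↔
       (∃ x, stP x ∧ EvalIn mem FalseC (Internal mem stP) φ (Fin.snoc val x)))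
  /-- 1c: elements of internal sets are internal. -/
  internal_trans : ∀ x y, Internal mem stP x → mem y x → Internal mem stP y
  /-- 2: Standardization. -/
  standardization : ∀ X, ∃ Y, stP Y ∧ ∀ z, stP z → (mem z Y ↔ mem z X)
  /-- 3: Extensionality. -/
  ext : ∀ x y, (∀ z, mem z x ↔ mem z y) → x = y
  /-- 3: Pairing. -/
  pairing : ∀ x y, ∃ p, UPairIn mem TrueC p x y
  /-- 3: Union. -/
  union : ∀ x, ∃ u, ∀ z, mem z u ↔ ∃ y, mem y x ∧ mem z y
  /-- 3: Infinity. -/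
  infinity : ∃ w, (∃ e, mem e w ∧ EmptyIn mem TrueC e) ∧
    ∀ x, mem x w → ∃ s, mem s w ∧ SuccIn mem TrueC s x
  /-- 3: Separation for all ∈-st-formulas. -/
  separation : ∀ {n} (φ : StFormula (n + 1)) (val : Fin n → M) (x : M),
    ∃ s, ∀ z, mem z s ↔ (mem z x ∧ EvalIn mem stP TrueC φ (Fin.snoc val z))
  /-- 3: Collection for all ∈-st-formulas. -/
  collection : ∀ {n} (φ : StFormula (n + 2)) (val : Fin n → M) (x : M),
    ∃ B, ∀ a, mem a x → (∃ b, EvalIn mem stP TrueC φ (Fin.snoc (Fin.snoc val a) b)) →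
      ∃ b, mem b B ∧ EvalIn mem stP TrueC φ (Fin.snoc (Fin.snoc val a) b)
  /-- 3: Replacement for all ∈-st-formulas. -/
  replacement : ∀ {n} (φ : StFormula (n + 2)) (val : Fin n → M) (x : M),
    (∀ a b b', EvalIn mem stP TrueC φ (Fin.snoc (Fin.snoc val a) b) →
      EvalIn mem stP TrueC φ (Fin.snoc (Fin.snoc val a) b') → b = b') →
    ∃ B, ∀ b, mem b B ↔ ∃ a, mem a x ∧ EvalIn mem stP TrueC φ (Fin.snoc (Fin.snoc val a) b)
  /-- 4: Weak Regularity. -/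
  weak_reg : ∀ X, (∃ x, mem x X) →
    ∃ x, mem x X ∧ ∀ y, mem y x → mem y X → Internal mem stP y
  /-- 5: Saturation for standard size families of internal sets. -/
  saturation : ∀ X, SSize mem stP X → (∀ Y, mem Y X → Internal mem stP Y) →
    (∀ X', (∃ Y, mem Y X') → SubIn mem TrueC X' X → FiniteIn mem TrueC X' →
      ∃ z, ∀ Y, mem Y X' → mem z Y) →
    ∃ z, ∀ Y, mem Y X → mem z Y
  /-- 6: Choice for families indexed by a set of standard size. -/
  ss_choice : ∀ X, SSize mem stP X → (∀ x, mem x X → ∃ y, mem y x) →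
    ∃ f, FuncOnIn mem TrueC f (fun x => mem x X) ∧
      ∀ x y, mem x X → FValIn mem TrueC f x y → mem y x
  /-- 6: Dependent Choice. -/
  dep_choice : ∀ X R x0, mem x0 X →
    (∀ x, mem x X → ∃ y, mem y X ∧ ∃ q, mem q R ∧ OPairIn mem TrueC q x y) →
    ∃ w f, (∀ z, mem z w ↔ NatIn mem TrueC z) ∧ FuncOnIn mem TrueC f (fun k => mem k w) ∧
      (∀ k y, mem k w → FValIn mem TrueC f k y → mem y X) ∧
      (∀ e, EmptyIn mem TrueC e → mem e w → FValIn mem TrueC f e x0) ∧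
      (∀ k s y y', mem k w → mem s w → SuccIn mem TrueC s k →
        FValIn mem TrueC f k y → FValIn mem TrueC f s y' →
        ∃ q, mem q R ∧ OPairIn mem TrueC q y y')

/-! ### BST -/

/-- The class `C` (with the standardness predicate `stP`) is a model of
bounded set theory BST. -/
structure BSTModelIn (mem : M → M → Prop) (stP : M → Prop) (C : M → Prop) : Prop where
  /-- ZFC in the ∈-language. -/
  zfc : ZFCModelIn mem C
  /-- standard sets belong to the universe. -/
  st_sub : ∀ x, stP x → C x
  /-- Bounded Idealization. -/
  bdd_idealization : ∀ {n} (φ : StFormula (n + 2)), φ.IsEpsilon →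
    ∀ val : Fin n → M, (∀ i, C (val i)) → ∀ X, stP X →
      ((∀ A, stP A → FiniteIn mem C A →
          ∃ x, C x ∧ mem x X ∧ ∀ a, C a → mem a A →
            EvalIn mem stP C φ (Fin.snoc (Fin.snoc val x) a)) ↔
       (∃ x, C x ∧ mem x X ∧ ∀ a, stP a →
          EvalIn mem stP C φ (Fin.snoc (Fin.snoc val x) a)))
  /-- Standardization for all ∈-st-formulas. -/
  standardization : ∀ {n} (φ : StFormula (n + 1)) (val : Fin n → M), (∀ i, C (val i)) →
    ∀ X, stP X → ∃ Y, stP Y ∧ ∀ x, stP x →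
      (mem x Y ↔ (mem x X ∧ EvalIn mem stP C φ (Fin.snoc val x)))
  /-- Transfer. -/
  transfer : ∀ {n} (φ : StFormula (n + 1)), φ.IsEpsilon →
    ∀ val : Fin n → M, (∀ i, stP (val i)) →
      (∃ x, C x ∧ EvalIn mem FalseC C φ (Fin.snoc val x)) →
      ∃ x, stP x ∧ EvalIn mem FalseC C φ (Fin.snoc val x)
  /-- Boundedness. -/
  boundedness : ∀ x, C x → ∃ X, stP X ∧ mem x X

/-! ### Condensation -/

/-- `h` is the condensation map: `h x = {h y : y ∈ x, y standard}` for standard `x`. -/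
def Condenses (mem : M → M → Prop) (stP : M → Prop) (h : M → M) : Prop :=
  ∀ x, stP x → ∀ z, mem z (h x) ↔ ∃ y, stP y ∧ mem y x ∧ z = h y

/-- The condensed subuniverse `V = {h x : x standard}`. -/
def CondV (stP : M → Prop) (h : M → M) (z : M) : Prop := ∃ x, stP x ∧ z = h x

/-! ### Internally presented structures and the isomorphism property -/

/-- `t` codes the tuple `l` (as an iterated Kuratowski pair). -/
def TupCode (mem : M → M → Prop) : List M → M → Prop
  | [], t => ∀ z, ¬ mem z t
  | x :: l, t => ∃ r, OPairIn mem TrueC t x r ∧ TupCode mem l r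

/-- `(A, R)` is an internally presented structure of the (relational) language
with symbols `ι` and arities `ar`: the base set `A` and each interpretation
`R s` (a set of `ar s`-tuples from `A`) is internal. -/
def IntPresented (mem : M → M → Prop) (stP : M → Prop) {ι : Type v} (ar : ι → ℕ)
    (A : M) (R : ι → M) : Prop :=
  Internal mem stP A ∧ ∀ s : ι, Internal mem stP (R s) ∧
    ∀ t, mem t (R s) → ∃ l : List M, l.length = ar s ∧ (∀ x ∈ l, mem x A) ∧ TupCode mem l t

/-- First-order formulas of a relational language. -/
inductive FOF (ι : Type v) (ar : ι → ℕ) : ℕ → Type v where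
  | rel {n} (s : ι) (ts : Fin (ar s) → Fin n) : FOF ι ar n
  | eq {n} (i j : Fin n) : FOF ι ar n
  | not {n} (φ : FOF ι ar n) : FOF ι ar n
  | and {n} (φ ψ : FOF ι ar n) : FOF ι ar n
  | all {n} (φ : FOF ι ar (n + 1)) : FOF ι ar n

/-- Satisfaction in an internally presented structure. -/
def FOSat (mem : M → M → Prop) {ι : Type v} {ar : ι → ℕ} (A : M) (R : ι → M) :
    ∀ {n}, FOF ι ar n → (Fin n → M) → Prop
  | _, .rel s ts, val => ∃ t, TupCode mem (List.ofFn fun k => val (ts k)) t ∧ mem t (R s)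
  | _, .eq i j, val => val i = val j
  | _, .not φ, val => ¬ FOSat mem A R φ val
  | _, .and φ ψ, val => FOSat mem A R φ val ∧ FOSat mem A R ψ val
  | _, .all φ, val => ∀ x, mem x A → FOSat mem A R φ (Fin.snoc val x)

/-- Elementary equivalence of the two structures. -/
def ElemEq (mem : M → M → Prop) {ι : Type v} (ar : ι → ℕ)
    (A : M) (RA : ι → M) (B : M) (RB : ι → M) : Prop :=
  ∀ φ : FOF ι ar 0, (FOSat mem A RA φ Fin.elim0 ↔ FOSat mem B RB φ Fin.elim0)

/-- The two structures are isomorphic (via an isomorphism which is a set of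
the model). -/
def IsoIn (mem : M → M → Prop) {ι : Type v}
    (A : M) (RA : ι → M) (B : M) (RB : ι → M) : Prop :=
  ∃ f : M, FuncOnIn mem TrueC f (fun x => mem x A) ∧
    (∀ x y, mem x A → FValIn mem TrueC f x y → mem y B) ∧
    (∀ x x' y, FValIn mem TrueC f x y → FValIn mem TrueC f x' y → x = x') ∧
    (∀ y, mem y B → ∃ x, mem x A ∧ FValIn mem TrueC f x y) ∧
    (∀ (s : ι) (l l' : List M), (∀ x ∈ l, mem x A) →
      List.Forall₂ (FValIn mem TrueC f) l l' →
      ∀ t t', TupCode mem l t → TupCode mem l' t' → (mem t (RA s) ↔ mem t' (RB s)))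

/-- The index type `ι` is of standard size: it is equinumerous (externally)
with `σS = {x ∈ S : st x}` for some standard `S`. -/
def SSizeIndex (mem : M → M → Prop) (stP : M → Prop) (ι : Type v) : Prop :=
  ∃ S : M, stP S ∧ ∃ e : ι → M, Function.Injective e ∧
    (∀ i, stP (e i) ∧ mem (e i) S) ∧ (∀ x, stP x → mem x S → ∃ i, e i = x)

/-- The isomorphism property IP: any two internally presented elementarily
equivalent structures of a language with (standard size)-many symbols are
isomorphic. -/
def IPProp (mem : M → M → Prop) (stP : M → Prop) : Prop :=
  ∀ (ι : Type u) (ar : ι → ℕ), SSizeIndex mem stP ι →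
    ∀ (A : M) (RA : ι → M) (B : M) (RB : ι → M),
      IntPresented mem stP ar A RA → IntPresented mem stP ar B RB →
      ElemEq mem ar A RA B RB → IsoIn mem A RA B RB

/-! ### Partially ordered sets inside the model; closure and distributivity -/

section PO
variable (mem : M → M → Prop)

/-- `p ≤ q` according to the set `R` of ordered pairs. -/
def LeVia (R p q : M) : Prop := ∃ z, mem z R ∧ OPairIn mem TrueC z p q

/-- `⟨P; R⟩` is a partially ordered set (coded in the model). -/
def IsPOOn (P R : M) : Prop :=
  (∀ z, mem z R → ∃ p q, mem p P ∧ mem q P ∧ OPairIn mem TrueC z p q) ∧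
  (∀ p, mem p P → LeVia mem R p p) ∧
  (∀ p q, LeVia mem R p q → LeVia mem R q p → p = q) ∧
  (∀ p q r, LeVia mem R p q → LeVia mem R q r → LeVia mem R p r)

/-- `⟨P; R⟩` is `κ`-closed: every decreasing `κ`-sequence (a set-coded function
on `κ`) has a lower bound. -/
def KClosed (κ P R : M) : Prop :=
  ∀ f, FuncOnIn mem TrueC f (fun α => mem α κ) →
    (∀ α y, mem α κ → FValIn mem TrueC f α y → mem y P) →
    (∀ α β u w, mem α β → mem β κ → FValIn mem TrueC f α u → FValIn mem TrueC f β w →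
      LeVia mem R w u) →
    ∃ p, mem p P ∧ ∀ α u, mem α κ → FValIn mem TrueC f α u → LeVia mem R p u

/-- `Y` is an open dense subset of `⟨P; R⟩`. -/
def OpenDenseIn (P R Y : M) : Prop :=
  (∀ y, mem y Y → mem y P) ∧
  (∀ p, mem p P → ∃ q, mem q Y ∧ LeVia mem R q p) ∧
  (∀ p q, mem p P → mem q Y → LeVia mem R p q → mem p Y)

/-- `⟨P; R⟩` is `κ`-distributive: the intersection of `κ`-many open dense
subsets is dense. -/
def KDistrib (κ P R : M) : Prop :=
  ∀ Df, FuncOnIn mem TrueC Df (fun α => mem α κ) →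
    (∀ α Y, mem α κ → FValIn mem TrueC Df α Y → OpenDenseIn mem P R Y) →
    ∀ p, mem p P → ∃ q, mem q P ∧ LeVia mem R q p ∧
      ∀ α Y, mem α κ → FValIn mem TrueC Df α Y → mem q Y

/-- For each cardinal `κ`, every `κ`-closed p.o. set is `κ`-distributive. -/
def KClosedDistrib : Prop :=
  ∀ κ, CardinalIn mem TrueC κ → ∀ P R, IsPOOn mem P R → KClosed mem κ P R → KDistrib mem κ P R

/-- `⟨P; R⟩` is standard size distributive: `κ`-distributive for every cardinal. -/
def SSDistribOn (P R : M) : Prop :=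
  ∀ κ, CardinalIn mem TrueC κ → KDistrib mem κ P R

end PO

/-! ### The class L[I] of sets constructible from internal sets -/

section LI
variable (mem : M → M → Prop) (stP : M → Prop)

/-- `n` is a natural number of the internal universe. -/
def INat (n : M) : Prop := Internal mem stP n ∧ NatIn mem (Internal mem stP) n

/-- `t` is an internal finite sequence: an internal function whose domain is a
natural number of the internal universe. -/
def IsISeq (t : M) : Prop :=
  Internal mem stP t ∧ ∃ n, INat mem stP n ∧ FuncOnIn mem TrueC t (fun i => mem i n)

/-- `T` is a tree: a nonempty set of internal finite sequences closed under
initial segments. -/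
def IsTreeSet (T : M) : Prop :=
  (∃ t, mem t T) ∧ (∀ t, mem t T → IsISeq mem stP t) ∧
  (∀ t, mem t T → ∀ t', IsISeq mem stP t' → SubIn mem TrueC t' t → mem t' T)

/-- `t` is a `⊆`-maximal element of `T`. -/
def MaxIn (T t : M) : Prop := mem t T ∧ ∀ s, mem s T → SubIn mem TrueC t s → s = t

/-- `T` is well-founded: every nonempty subset of `T` has a `⊆`-maximal element. -/
def WfTreeSet (T : M) : Prop :=
  ∀ T', (∃ t, mem t T') → SubIn mem TrueC T' T →
    ∃ t, mem t T' ∧ ∀ s, mem s T' → SubIn mem TrueC t s → s = t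

/-- `s = t ⌢ a`. -/
def IsConcat (s t a : M) : Prop :=
  ∃ n n', INat mem stP n ∧ SuccIn mem TrueC n' n ∧
    FuncOnIn mem TrueC t (fun i => mem i n) ∧ FuncOnIn mem TrueC s (fun i => mem i n') ∧
    (∀ i w, mem i n → (FValIn mem TrueC t i w ↔ FValIn mem TrueC s i w)) ∧
    FValIn mem TrueC s n a

/-- `p` is of the form `⟨A, B, η⟩` with `A, B` standard and `η` an internal
function on `A × B`. -/
def CpForm (p A B η : M) : Prop :=
  (∃ r, OPairIn mem TrueC p A r ∧ OPairIn mem TrueC r B η) ∧ stP A ∧ stP B ∧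
    Internal mem stP η ∧
    FuncOnIn mem TrueC η (fun q => ∃ a b, mem a A ∧ mem b B ∧ OPairIn mem TrueC q a b)

/-- `z = C_p = ⋃_{a ∈ σA} ⋂_{b ∈ σB} η(a,b)` (and `z = ∅` if `p` is not of
the appropriate form). -/
def IsCp (p z : M) : Prop :=
  (∃ A B η, CpForm mem stP p A B η ∧
    ∀ x, mem x z ↔ ∃ a, stP a ∧ mem a A ∧ ∀ b, stP b → mem b B →
      ∃ q w, OPairIn mem TrueC q a b ∧ FValIn mem TrueC η q w ∧ mem x w) ∨
  ((¬ ∃ A B η, CpForm mem stP p A B η) ∧ ∀ x, ¬ mem x z)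

/-- `z` is an elementary external set. -/
def EE (z : M) : Prop := ∃ p, Internal mem stP p ∧ IsCp mem stP p z

/-- `⟨T, F⟩` is a wf pair with `T, F ∈ E`: `T` is a wf tree and
`F : Max T → I`. -/
def IsWfPairHC (T F : M) : Prop :=
  EE mem stP T ∧ EE mem stP F ∧ IsTreeSet mem stP T ∧ WfTreeSet mem T ∧
  FuncOnIn mem TrueC F (MaxIn mem T) ∧
  (∀ t y, FValIn mem TrueC F t y → Internal mem stP y)

/-- `z ∈ L[I]`: `z = F[T]` for some wf pair `⟨T, F⟩ ∈ H`, witnessed by an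
assembling function `g` (so `z = F_T(Λ)`). -/
def LIclass (z : M) : Prop :=
  ∃ T F, IsWfPairHC mem stP T F ∧ ∃ g : M → M,
    (∀ t, MaxIn mem T t → FValIn mem TrueC F t (g t)) ∧
    (∀ t, mem t T → ¬ MaxIn mem T t →
      ∀ w, mem w (g t) ↔ ∃ s, mem s T ∧ (∃ a, IsConcat mem stP s t a) ∧ w = g s) ∧
    ∃ e, (∀ w, ¬ mem w e) ∧ mem e T ∧ z = g e

end LI

end HSTF

namespace HSTF

variable {M : Type u}

/-! ### Forcing over a model of HST -/

/-- `H` is well-founded over `I`: the ordinals of the model are well-founded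
in the wider universe. -/
def WfOverI (mem : M → M → Prop) : Prop :=
  WellFounded (fun x y : M => OrdIn mem TrueC x ∧ OrdIn mem TrueC y ∧ mem x y)

/-- `a = x̆ = ⟨0, x⟩`, the canonical name for `x`. -/
def IsBreve (mem : M → M → Prop) (a x : M) : Prop :=
  ∃ e, (∀ z, ¬ mem z e) ∧ OPairIn mem TrueC a e x

/-- `a` is a `P`-name (for the class `Pp` of forcing conditions):
either a canonical name `x̆`, or a set of pairs `⟨p, b⟩` with `p` a condition
and `b` a name. -/
inductive IsName (mem : M → M → Prop) (Pp : M → Prop) : M → Prop where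
  | ground (a x : M) (h : IsBreve mem a x) : IsName mem Pp a
  | mk (a : M) (pf bf : M → M)
      (h : ∀ z, mem z a → Pp (pf z) ∧ OPairIn mem TrueC z (pf z) (bf z))
      (hrec : ∀ z, mem z a → IsName mem Pp (bf z)) : IsName mem Pp a

/-- External values of names: either an element of the model (an atom) or a
set of previously constructed values. -/
inductive GVal (M : Type u) : Type (u + 1) where
  | atom (x : M) : GVal M
  | mk (ι : Type u) (f : ι → GVal M) : GVal M

/-- The value `v` is extensionally equal to (the model element) `x`. -/
def AEq (mem : M → M → Prop) : M → GVal M → Prop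
  | x, .atom y => x = y
  | x, .mk _ f => (∀ y, mem y x → ∃ i, AEq mem y (f i)) ∧ (∀ i, ∃ y, mem y x ∧ AEq mem y (f i))

/-- Extensional equality of values (identifying a value with a model element
having the same members). -/
def GEquiv (mem : M → M → Prop) : GVal M → GVal M → Prop
  | .atom x, v => AEq mem x v
  | .mk ι f, .atom y => AEq mem y (.mk ι f)
  | .mk _ f, .mk _ g => (∀ i, ∃ j, GEquiv mem (f i) (g j)) ∧ (∀ j, ∃ i, GEquiv mem (f i) (g j))

/-- Membership between values. -/
def GMem (mem : M → M → Prop) : GVal M → GVal M → Prop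
  | u, .atom x => ∃ y, mem y x ∧ GEquiv mem u (.atom y)
  | u, .mk _ f => ∃ i, GEquiv mem u (f i)

/-- `u` is the value `a[G]` of the name `a` under the generic class `G`. -/
inductive ValRel (mem : M → M → Prop) (Pp G : M → Prop) : M → GVal M → Prop where
  | ground (a x : M) (h : IsBreve mem a x) : ValRel mem Pp G a (GVal.atom x)
  | proper (a : M) (ι : Type u) (f : ι → GVal M)
      (hng : ¬ ∃ x, IsBreve mem a x)
      (sel : M → M → M → ι)
      (h1 : ∀ z p b, mem z a → Pp p → G p → OPairIn mem TrueC z p b →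
        ValRel mem Pp G b (f (sel z p b)))
      (zf pf bf : ι → M)
      (h2 : ∀ i, mem (zf i) a ∧ Pp (pf i) ∧ G (pf i) ∧
        OPairIn mem TrueC (zf i) (pf i) (bf i))
      (h3 : ∀ i, ValRel mem Pp G (bf i) (f i)) :
      ValRel mem Pp G a (GVal.mk ι f)

/-- Carrier of the generic extension `H[G]` (before extensional collapse). -/
def HGCarrier (mem : M → M → Prop) (Pp G : M → Prop) : Type (u + 1) :=
  {w : GVal M // ∃ a, IsName mem Pp a ∧ ValRel mem Pp G a w}

/-- The generic extension `H[G] = {a[G] : a a name}`, extensional values being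
identified. -/
def HGType (mem : M → M → Prop) (Pp G : M → Prop) : Type (u + 1) :=
  Quot (fun u w : HGCarrier mem Pp G => GEquiv mem u.1 w.1)

/-- Membership `∈_G` of the extension. -/
def QMem (mem : M → M → Prop) (Pp G : M → Prop) (a b : HGType mem Pp G) : Prop :=
  ∃ u w : HGCarrier mem Pp G, a = Quot.mk _ u ∧ b = Quot.mk _ w ∧ GMem mem u.1 w.1

/-- Standardness in the extension. -/
def QSt (mem : M → M → Prop) (stP Pp G : M → Prop) (a : HGType mem Pp G) : Prop :=
  ∃ u : HGCarrier mem Pp G, a = Quot.mk _ u ∧ ∃ s, stP s ∧ GEquiv mem u.1 (GVal.atom s)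

/-- `b` (an element of `H[G]`) is the value `a[G]` of the name `a`. -/
def Represents (mem : M → M → Prop) (Pp G : M → Prop) (b : HGType mem Pp G) (a : M) : Prop :=
  ∃ u : HGCarrier mem Pp G, b = Quot.mk _ u ∧ ValRel mem Pp G a u.1

/-- `G` is generic over the model, for the conditions `Pp` ordered by `ple`:
upward closed, directed, and meeting every dense subset belonging to the model. -/
def GenericOver (mem : M → M → Prop) (Pp : M → Prop) (ple : M → M → Prop) (G : M → Prop) :
    Prop :=
  (∀ p, G p → Pp p) ∧
  (∀ p q, G p → Pp q → ple p q → G q) ∧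
  (∀ p q, G p → G q → ∃ r, G r ∧ ple r p ∧ ple r q) ∧
  (∀ D : M, (∀ z, mem z D → Pp z) → (∀ p, Pp p → ∃ q, mem q D ∧ ple q p) →
    ∃ q, G q ∧ mem q D)

/-- The auxiliary relation `p ⊩* b ∈ a`. -/
def SFo (mem : M → M → Prop) (Pp : M → Prop) (ple : M → M → Prop) (p b a : M) : Prop :=
  (∃ x, IsBreve mem a x ∧ ∃ y, mem y x ∧ IsBreve mem b y) ∨
  ((¬ ∃ x, IsBreve mem a x) ∧ ∃ q z, Pp q ∧ ple p q ∧ mem z a ∧ OPairIn mem TrueC z q b)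

/-- Forcing for atomic formulas: `AFo _ _ _ true p a b` means `p ⊩ a = b`,
and `AFo _ _ _ false p b a` means `p ⊩ b ∈ a`. -/
inductive AFo (mem : M → M → Prop) (Pp : M → Prop) (ple : M → M → Prop) :
    Bool → M → M → M → Prop where
  | breveEq (p a b x y : M) (ha : IsBreve mem a x) (hb : IsBreve mem b y) (hxy : x = y) :
      AFo mem Pp ple true p a b
  | breveMem (p b a x y : M) (hb : IsBreve mem b y) (ha : IsBreve mem a x) (hm : mem y x) :
      AFo mem Pp ple false p b a
  | eqI (p a b : M)
      (h1 : ∀ q x, Pp q → ple q p → SFo mem Pp ple q x a → AFo mem Pp ple false q x b)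
      (h2 : ∀ q y, Pp q → ple q p → SFo mem Pp ple q y b → AFo mem Pp ple false q y a) :
      AFo mem Pp ple true p a b
  | memI (p b a : M) (rf zf : M → M)
      (h1 : ∀ q, Pp q → ple q p → Pp (rf q) ∧ ple (rf q) q ∧ SFo mem Pp ple (rf q) (zf q) a)
      (h2 : ∀ q, Pp q → ple q p → AFo mem Pp ple true (rf q) b (zf q)) :
      AFo mem Pp ple false p b a

/-- The forcing relation `p ⊩ Φ`, for a formula with names as parameters. -/
def Fo (mem : M → M → Prop) (stP : M → Prop) (Pp : M → Prop) (ple : M → M → Prop) :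
    ∀ {n}, M → StFormula n → (Fin n → M) → Prop
  | _, p, .mem i j, val => AFo mem Pp ple false p (val i) (val j)
  | _, p, .eq i j, val => AFo mem Pp ple true p (val i) (val j)
  | _, p, .st i, val => ∀ q, Pp q → ple q p → ∃ r, Pp r ∧ ple r q ∧
      ∃ s b, stP s ∧ IsBreve mem b s ∧ AFo mem Pp ple true r (val i) b
  | _, p, .not φ, val => ∀ q, Pp q → ple q p → ¬ Fo mem stP Pp ple q φ val
  | _, p, .and φ ψ, val => Fo mem stP Pp ple p φ val ∧ Fo mem stP Pp ple p ψ val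
  | _, p, .all φ, val => ∀ a, IsName mem Pp a → Fo mem stP Pp ple p φ (Fin.snoc val a)

/-! ### The type-theoretic extension L^∞ and the forcing P_{LAB} -/

/-- Types of the type-theoretic extension: `0` and `τ(l₁, …, l_k)`. -/
inductive TType : Type where
  | zero : TType
  | tau (l : List TType) : TType

mutual
/-- `x` is an object of type `l` over the internal set `D`. -/
def ObjType (mem : M → M → Prop) (intl : M → Prop) (D : M) : TType → M → Prop
  | .zero, x => mem x D
  | .tau ls, x => intl x ∧ ∀ z, mem z x → ObjTuple mem intl D ls z
/-- `z` codes a tuple of objects of the given types over `D`. -/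
def ObjTuple (mem : M → M → Prop) (intl : M → Prop) (D : M) : List TType → M → Prop
  | [], z => ∀ w, ¬ mem w z
  | t :: ts, z => ∃ y r, OPairIn mem TrueC z y r ∧ ObjType mem intl D t y ∧
      ObjTuple mem intl D ts r
end

mutual
/-- The canonical extension `p^l` of an internal bijection `p` to objects of
type `l`: `PExt mem intl p l x y` means `p^l(x) = y`. -/
def PExt (mem : M → M → Prop) (intl : M → Prop) (p : M) : TType → M → M → Prop
  | .zero, x, y => FValIn mem TrueC p x y
  | .tau ls, x, y => intl y ∧
      (∀ z, mem z x → ∃ w, mem w y ∧ PExtTuple mem intl p ls z w) ∧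
      (∀ w, mem w y → ∃ z, mem z x ∧ PExtTuple mem intl p ls z w)
def PExtTuple (mem : M → M → Prop) (intl : M → Prop) (p : M) : List TType → M → M → Prop
  | [], z, w => (∀ u, ¬ mem u z) ∧ (∀ u, ¬ mem u w)
  | t :: ts, z, w => ∃ x r x' r', OPairIn mem TrueC z x r ∧ OPairIn mem TrueC w x' r' ∧
      PExt mem intl p t x x' ∧ PExtTuple mem intl p ts r r'
end

/-- Formulas of the type-theoretic extension `L^∞` of the language with symbols
`ι`; `m` counts the `L`-variables, `Γ` is the context of typed variables. -/
inductive LIF (ι : Type v) : ℕ → List TType → Type v where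
  | rel {m Γ} (s : ι) (k : ℕ) (ts : Fin k → Fin m) : LIF ι m Γ
  | eqL {m Γ} (i j : Fin m) : LIF ι m Γ
  | eqT {m Γ} (i : Fin m) (j : Fin Γ.length) (h : Γ.get j = TType.zero) : LIF ι m Γ
  | app {m Γ} (f : Fin Γ.length) (args : List (Fin Γ.length))
      (h : Γ.get f = TType.tau (args.map Γ.get)) : LIF ι m Γ
  | not {m Γ} (φ : LIF ι m Γ) : LIF ι m Γ
  | and {m Γ} (φ ψ : LIF ι m Γ) : LIF ι m Γ
  | allL {m Γ} (φ : LIF ι (m + 1) Γ) : LIF ι m Γ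
  | allT {m Γ} (t : TType) (φ : LIF ι m (t :: Γ)) : LIF ι m Γ

/-- Satisfaction of an `L^∞`-formula in the structure `A[D]` (base set `Amb`,
typed domains over `D`, interpretations `R`). -/
def SatInf {ι : Type v} (mem : M → M → Prop) (intl : M → Prop) (Amb D : M) (R : ι → M) :
    ∀ {m Γ}, LIF ι m Γ → (Fin m → M) → (Fin Γ.length → M) → Prop
  | _, _, .rel s _ ts, vL, _ => ∃ t, TupCode mem (List.ofFn fun i => vL (ts i)) t ∧ mem t (R s)
  | _, _, .eqL i j, vL, _ => vL i = vL j
  | _, _, .eqT i j _, vL, vT => vL i = vT j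
  | _, _, .app f args _, _, vT => ∃ t, TupCode mem (args.map vT) t ∧ mem t (vT f)
  | _, _, .not φ, vL, vT => ¬ SatInf mem intl Amb D R φ vL vT
  | _, _, .and φ ψ, vL, vT => SatInf mem intl Amb D R φ vL vT ∧ SatInf mem intl Amb D R ψ vL vT
  | _, _, .allL φ, vL, vT => ∀ x, mem x Amb → SatInf mem intl Amb D R φ (Fin.cons x vL) vT
  | _, _, .allT t φ, vL, vT => ∀ x, ObjType mem intl D t x →
      SatInf mem intl Amb D R φ vL (Fin.cons x vT)

/-- `p` is a condition of the forcing `P_{LAB}` with domain `D` and range `E`: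
an internal 1-1 map of `D ⊆ A` onto `E ⊆ B` preserving all closed
`L^∞`-formulas with parameters in `D^∞`. -/
def PCondOn (mem : M → M → Prop) (stP : M → Prop) {ι : Type v}
    (A B : M) (RA RB : ι → M) (D E p : M) : Prop :=
  Internal mem stP p ∧ Internal mem stP D ∧ Internal mem stP E ∧
  SubIn mem TrueC D A ∧ SubIn mem TrueC E B ∧
  FuncOnIn mem TrueC p (fun x => mem x D) ∧
  (∀ x x' y, FValIn mem TrueC p x y → FValIn mem TrueC p x' y → x = x') ∧
  (∀ y, mem y E ↔ ∃ x, mem x D ∧ FValIn mem TrueC p x y) ∧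
  (∀ (Γ : List TType) (φ : LIF ι 0 Γ) (vT wT : Fin Γ.length → M),
    (∀ j, ObjType mem (Internal mem stP) D (Γ.get j) (vT j)) →
    (∀ j, PExt mem (Internal mem stP) p (Γ.get j) (vT j) (wT j)) →
    (SatInf mem (Internal mem stP) A D RA φ Fin.elim0 vT ↔
     SatInf mem (Internal mem stP) B E RB φ Fin.elim0 wT))

/-- `p ∈ P_{LAB}`. -/
def PCond (mem : M → M → Prop) (stP : M → Prop) {ι : Type v}
    (A B : M) (RA RB : ι → M) (p : M) : Prop :=
  ∃ D E, PCondOn mem stP A B RA RB D E p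

/-! ### The product forcing Π -/

section Pi
variable (mem : M → M → Prop) (stP : M → Prop)

/-- `i = ⟨w, κ, L, A, B⟩`. -/
def Is5Tup (i w κ L A B : M) : Prop :=
  ∃ r1 r2 r3, OPairIn mem TrueC i w r1 ∧ OPairIn mem TrueC r1 κ r2 ∧
    OPairIn mem TrueC r2 L r3 ∧ OPairIn mem TrueC r3 A B

/-- `κ` is a cardinal of the internal universe. -/
def ICardinal (κ : M) : Prop :=
  Internal mem stP κ ∧ CardinalIn mem (Internal mem stP) κ

/-- `x` is internal and finite in the sense of the internal universe. -/
def IFinite (x : M) : Prop := Internal mem stP x ∧ FiniteIn mem (Internal mem stP) x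

/-- `i` is an index: an internal 5-tuple `⟨w, κ, L, A, B⟩` where `κ` is an
I-cardinal, `L` an internal language `{s_α : α < κ}`, and `A`, `B` internal
`L`-structures (coded as pairs of a base set and an interpretation map). -/
def IsIndex (i : M) : Prop :=
  Internal mem stP i ∧ ∃ w κ L A B, Is5Tup mem i w κ L A B ∧
    Internal mem stP w ∧ ICardinal mem stP κ ∧
    Internal mem stP L ∧ FuncOnIn mem TrueC L (fun α => mem α κ) ∧
    (∃ bA iA, OPairIn mem TrueC A bA iA ∧ Internal mem stP bA ∧ Internal mem stP iA ∧
      FuncOnIn mem TrueC iA (fun α => mem α κ)) ∧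
    (∃ bB iB, OPairIn mem TrueC B bB iB ∧ Internal mem stP bB ∧ Internal mem stP iB ∧
      FuncOnIn mem TrueC iB (fun α => mem α κ))

/-- `q ∈ P_{L_i A_i B_i}` for the index with components `κ, A, B`: the
language of the restricted structures has as symbols the standard `α < κ`. -/
def PCondIdx (κ A B q : M) : Prop :=
  ∀ bA iA bB iB, OPairIn mem TrueC A bA iA → OPairIn mem TrueC B bB iB →
    ∀ RA RB : {α : M // stP α ∧ mem α κ} → M,
      (∀ α, FValIn mem TrueC iA α.1 (RA α)) → (∀ α, FValIn mem TrueC iB α.1 (RB α)) →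
      PCond mem stP bA bB RA RB q

/-- `π ∈ Π`: an internal function with internal I-finite domain consisting of
indices, whose value at each index is a condition of the corresponding
forcing `P_{L_i A_i B_i}`. -/
def IsPiCond (π : M) : Prop :=
  Internal mem stP π ∧ ∃ d, Internal mem stP d ∧ IFinite mem stP d ∧
    (∀ i, mem i d → IsIndex mem stP i) ∧ FuncOnIn mem TrueC π (fun i => mem i d) ∧
    (∀ i q w κ L A B, mem i d → FValIn mem TrueC π i q → Is5Tup mem i w κ L A B →
      PCondIdx mem stP κ A B q)

/-- The order of `Π`: `π ≤ ρ` iff the domain of `π` extends that of `ρ` and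
componentwise `π_i ≤ ρ_i` (i.e. `ρ_i ⊆ π_i`). -/
def PiLe (π ρ : M) : Prop :=
  ∀ i q, FValIn mem TrueC ρ i q → ∃ q', FValIn mem TrueC π i q' ∧ SubIn mem TrueC q q'

/-- `Dc` is an open dense subclass of `Π`. -/
def PiOpenDense (Dc : M → Prop) : Prop :=
  (∀ π, Dc π → IsPiCond mem stP π) ∧
  (∀ π, IsPiCond mem stP π → ∃ ρ, Dc ρ ∧ IsPiCond mem stP ρ ∧ PiLe mem ρ π) ∧
  (∀ π ρ, IsPiCond mem stP π → Dc ρ → PiLe mem π ρ → Dc π)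

end Pi

/-! ### Miscellanea for particular statements -/

/-- `X` is infinite in the sense of the internal universe. -/
def InfiniteI (mem : M → M → Prop) (stP : M → Prop) (X : M) : Prop :=
  Internal mem stP X ∧ ¬ FiniteIn mem (Internal mem stP) X

/-- `card X < card Y` in the internal universe. -/
def CardLtI (mem : M → M → Prop) (stP : M → Prop) (X Y : M) : Prop :=
  ∃ κ μ, ICardinal mem stP κ ∧ ICardinal mem stP μ ∧ mem κ μ ∧
    EquinumIn mem (Internal mem stP) X κ ∧ EquinumIn mem (Internal mem stP) Y μ

end HSTF

namespace HSTF


open StFormula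

def orF {n} (φ ψ : StFormula n) : StFormula n := .not (.and (.not φ) (.not ψ))
def impF {n} (φ ψ : StFormula n) : StFormula n := .not (.and φ (.not ψ))
def exF {n} (φ : StFormula (n+1)) : StFormula n := .not (.all (.not φ))

variable {M : Type u} {mem : M → M → Prop} {stP C : M → Prop}

lemma eval_and {n} (φ ψ : StFormula n) (val : Fin n → M) :
    EvalIn mem stP C (.and φ ψ) val ↔ EvalIn mem stP C φ val ∧ EvalIn mem stP C ψ val :=
  Iff.rfl

lemma eval_not {n} (φ : StFormula n) (val : Fin n → M) :
    EvalIn mem stP C (.not φ) val ↔ ¬ EvalIn mem stP C φ val := Iff.rfl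

lemma eval_mem {n} (i j : Fin n) (val : Fin n → M) :
    EvalIn mem stP C (.mem i j) val ↔ mem (val i) (val j) := Iff.rfl

lemma eval_eq {n} (i j : Fin n) (val : Fin n → M) :
    EvalIn mem stP C (.eq i j) val ↔ val i = val j := Iff.rfl

lemma eval_st {n} (i : Fin n) (val : Fin n → M) :
    EvalIn mem stP C (.st i) val ↔ stP (val i) := Iff.rfl

lemma eval_all {n} (φ : StFormula (n+1)) (val : Fin n → M) :
    EvalIn mem stP C (.all φ) val ↔
      ∀ x, C x → EvalIn mem stP C φ (Fin.snoc val x) := Iff.rfl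

lemma eval_orF {n} (φ ψ : StFormula n) (val : Fin n → M) :
    EvalIn mem stP C (orF φ ψ) val ↔ EvalIn mem stP C φ val ∨ EvalIn mem stP C ψ val := by
  simp only [orF, eval_not, eval_and]; tauto

lemma eval_impF {n} (φ ψ : StFormula n) (val : Fin n → M) :
    EvalIn mem stP C (impF φ ψ) val ↔ (EvalIn mem stP C φ val → EvalIn mem stP C ψ val) := by
  simp only [impF, eval_not, eval_and]; tauto

lemma eval_exF {n} (φ : StFormula (n+1)) (val : Fin n → M) :
    EvalIn mem stP C (exF φ) val ↔ ∃ x, C x ∧ EvalIn mem stP C φ (Fin.snoc val x) := by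
  rw [exF, eval_not, eval_all]
  push_neg
  simp only [eval_not, not_not]


lemma isEps_and {n} {φ ψ : StFormula n} (h1 : φ.IsEpsilon) (h2 : ψ.IsEpsilon) :
    (StFormula.and φ ψ).IsEpsilon := ⟨h1, h2⟩
lemma isEps_not {n} {φ : StFormula n} (h : φ.IsEpsilon) : (StFormula.not φ).IsEpsilon := h
lemma isEps_all {n} {φ : StFormula (n+1)} (h : φ.IsEpsilon) : (StFormula.all φ).IsEpsilon := h
lemma isEps_mem {n} (i j : Fin n) : (StFormula.mem i j).IsEpsilon := trivial
lemma isEps_eq {n} (i j : Fin n) : (StFormula.eq i j).IsEpsilon := trivial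
lemma isEps_orF {n} {φ ψ : StFormula n} (h1 : φ.IsEpsilon) (h2 : ψ.IsEpsilon) :
    (orF φ ψ).IsEpsilon := isEps_not (isEps_and (isEps_not h1) (isEps_not h2))
lemma isEps_impF {n} {φ ψ : StFormula n} (h1 : φ.IsEpsilon) (h2 : ψ.IsEpsilon) :
    (impF φ ψ).IsEpsilon := isEps_not (isEps_and h1 (isEps_not h2))
lemma isEps_exF {n} {φ : StFormula (n+1)} (h : φ.IsEpsilon) : (exF φ).IsEpsilon :=
  isEps_not (isEps_all (isEps_not h))

def singF {n} (s x : Fin n) : StFormula n :=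
  .all (.and (impF (.mem (Fin.last n) s.castSucc) (.eq (Fin.last n) x.castSucc))
             (impF (.eq (Fin.last n) x.castSucc) (.mem (Fin.last n) s.castSucc)))

def upairF {n} (t x y : Fin n) : StFormula n :=
  .all (.and (impF (.mem (Fin.last n) t.castSucc)
               (orF (.eq (Fin.last n) x.castSucc) (.eq (Fin.last n) y.castSucc)))
        (.and (impF (.eq (Fin.last n) x.castSucc) (.mem (Fin.last n) t.castSucc))
              (impF (.eq (Fin.last n) y.castSucc) (.mem (Fin.last n) t.castSucc))))

lemma eval_singF {n} (s x : Fin n) (val : Fin n → M) :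
    EvalIn mem stP C (singF s x) val ↔ ∀ u, C u → (mem u (val s) ↔ u = val x) := by
  simp only [singF, eval_all, eval_and, eval_impF, eval_mem, eval_eq,
    Fin.snoc_castSucc, Fin.snoc_last]
  constructor
  · intro h u hu; have := h u hu; tauto
  · intro h u hu; have := h u hu; tauto

lemma eval_upairF {n} (t x y : Fin n) (val : Fin n → M) :
    EvalIn mem stP C (upairF t x y) val ↔
      ∀ u, C u → (mem u (val t) ↔ (u = val x ∨ u = val y)) := by
  simp only [upairF, eval_all, eval_and, eval_impF, eval_orF, eval_mem, eval_eq,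
    Fin.snoc_castSucc, Fin.snoc_last]
  constructor
  · intro h u hu; have := h u hu; tauto
  · intro h u hu; have := h u hu; tauto

lemma isEps_singF {n} (s x : Fin n) : (singF s x).IsEpsilon :=
  isEps_all (isEps_and (isEps_impF trivial trivial) (isEps_impF trivial trivial))

lemma isEps_upairF {n} (t x y : Fin n) : (upairF t x y).IsEpsilon :=
  isEps_all (isEps_and (isEps_impF trivial (isEps_orF trivial trivial))
    (isEps_and (isEps_impF trivial trivial) (isEps_impF trivial trivial)))

/-- semantic counterpart of `pairF`. -/
def PairSem (mem : M → M → Prop) (C : M → Prop) (p x y : M) : Prop :=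
  ∃ s, C s ∧ ∃ t, C t ∧ ((∀ u, C u → (mem u s ↔ u = x)) ∧
    (∀ u, C u → (mem u t ↔ (u = x ∨ u = y))) ∧
    (∀ u, C u → (mem u p ↔ (u = s ∨ u = t))))

def pairF {n} (p x y : Fin n) : StFormula n :=
  exF (exF (.and (singF ((Fin.last n).castSucc) x.castSucc.castSucc)
       (.and (upairF (Fin.last (n+1)) x.castSucc.castSucc y.castSucc.castSucc)
             (upairF p.castSucc.castSucc ((Fin.last n).castSucc) (Fin.last (n+1))))))

lemma eval_pairF {n} (p x y : Fin n) (val : Fin n → M) :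
    EvalIn mem stP C (pairF p x y) val ↔ PairSem mem C (val p) (val x) (val y) := by
  simp only [pairF, eval_exF, eval_and, eval_singF, eval_upairF, Fin.snoc_castSucc,
    Fin.snoc_last, PairSem]

lemma isEps_pairF {n} (p x y : Fin n) : (pairF p x y).IsEpsilon :=
  isEps_exF (isEps_exF (isEps_and (isEps_singF _ _)
    (isEps_and (isEps_upairF _ _ _) (isEps_upairF _ _ _))))

def fvalF {n} (f x y : Fin n) : StFormula n :=
  exF (.and (.mem (Fin.last n) f.castSucc) (pairF (Fin.last n) x.castSucc y.castSucc))

lemma eval_fvalF {n} (f x y : Fin n) (val : Fin n → M) :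
    EvalIn mem stP C (fvalF f x y) val ↔
      ∃ q, C q ∧ mem q (val f) ∧ PairSem mem C q (val x) (val y) := by
  simp only [fvalF, eval_exF, eval_and, eval_mem, eval_pairF, Fin.snoc_castSucc, Fin.snoc_last]

lemma isEps_fvalF {n} (f x y : Fin n) : (fvalF f x y).IsEpsilon :=
  isEps_exF (isEps_and trivial (isEps_pairF _ _ _))


section ModelLemmas
variable {M : Type u} {mem : M → M → Prop} {stP : M → Prop}

lemma HSTModel.st_int (hH : HSTModel mem stP) {x : M} (hx : stP x) :
    Internal mem stP x := by
  obtain ⟨p, hp, hup⟩ := hH.zfc_st.pair x x hx hx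
  exact ⟨p, hp, (hup x hx).2 (Or.inl rfl)⟩

lemma HSTModel.mem_int (hH : HSTModel mem stP) {x y : M} (hy : Internal mem stP y)
    (hx : mem x y) : Internal mem stP x := hH.internal_trans y x hy hx

lemma HSTModel.mem_st_int (hH : HSTModel mem stP) {x y : M} (hy : stP y)
    (hx : mem x y) : Internal mem stP x := hH.mem_int (hH.st_int hy) hx

lemma HSTModel.transfer_all (hH : HSTModel mem stP) {n} (φ : StFormula (n+1))
    (hε : φ.IsEpsilon) (val : Fin n → M) (hval : ∀ i, stP (val i))
    (hstd : ∀ x, stP x → ¬ EvalIn mem FalseC (Internal mem stP) φ (Fin.snoc val x)) :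
    ∀ x, Internal mem stP x → ¬ EvalIn mem FalseC (Internal mem stP) φ (Fin.snoc val x) := by
  intro x hx hE
  obtain ⟨y, hy, hEy⟩ := (hH.transfer φ hε val hval).1 ⟨x, hx, hE⟩
  exact hstd y hy hEy

/-! ### quantifier-free upgrade lemmas -/

def noeltF : StFormula 2 := .mem (Fin.last 1) ((0 : Fin 1).castSucc)

def p4F : StFormula 4 :=
  .and (.mem (Fin.last 3) ((0 : Fin 3).castSucc))
    (.not (orF (.eq (Fin.last 3) ((1 : Fin 3).castSucc))
               (.eq (Fin.last 3) ((2 : Fin 3).castSucc))))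

def p5F : StFormula 4 :=
  .and (.mem (Fin.last 3) ((0 : Fin 3).castSucc))
    (.not (orF (.mem (Fin.last 3) ((1 : Fin 3).castSucc))
               (.eq (Fin.last 3) ((2 : Fin 3).castSucc))))

def p6F : StFormula 4 :=
  .and (.mem (Fin.last 3) ((0 : Fin 3).castSucc))
    (.not (orF (.mem (Fin.last 3) ((1 : Fin 3).castSucc))
               (.mem (Fin.last 3) ((2 : Fin 3).castSucc))))

lemma HSTModel.up_empty (hH : HSTModel mem stP) {a : M} (ha : stP a)
    (h : ∀ z, stP z → ¬ mem z a) : ∀ z, ¬ mem z a := by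
  have hEv : ∀ w : M, EvalIn mem FalseC (Internal mem stP) noeltF (Fin.snoc ![a] w) ↔
      mem w a := by
    intro w; simp only [noeltF, eval_mem, Fin.snoc_castSucc, Fin.snoc_last, Matrix.cons_val_zero]
  intro z hz
  exact hH.transfer_all noeltF trivial ![a] (fun i => by fin_cases i; exact ha)
    (fun x hx hE' => h x hx ((hEv x).1 hE')) z (hH.mem_st_int ha hz) ((hEv z).2 hz)

lemma HSTModel.up_mem_eq2 (hH : HSTModel mem stP) {a x y : M} (ha : stP a) (hx : stP x)
    (hy : stP y) (h : ∀ z, stP z → mem z a → (z = x ∨ z = y)) :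
    ∀ z, mem z a → (z = x ∨ z = y) := by
  have hEv : ∀ w : M, EvalIn mem FalseC (Internal mem stP) p4F (Fin.snoc ![a, x, y] w) ↔
      (mem w a ∧ ¬(w = x ∨ w = y)) := by
    intro w; simp only [p4F, eval_and, eval_not, eval_orF, eval_mem, eval_eq, Fin.snoc_castSucc, Fin.snoc_last, Matrix.cons_val_zero, Matrix.cons_val_one, Matrix.head_cons, Matrix.cons_val_two, Matrix.tail_cons]
  intro z hz
  by_contra hc
  exact hH.transfer_all p4F ⟨trivial, ⟨trivial, trivial⟩⟩ ![a, x, y]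
    (fun i => by fin_cases i <;> assumption)
    (fun w hw hE' => by
      obtain ⟨h1, h2⟩ := (hEv w).1 hE'
      exact h2 (h w hw h1)) z (hH.mem_st_int ha hz) ((hEv z).2 ⟨hz, hc⟩)

lemma HSTModel.up_mem_eq (hH : HSTModel mem stP) {a x : M} (ha : stP a) (hx : stP x)
    (h : ∀ z, stP z → mem z a → z = x) : ∀ z, mem z a → z = x := by
  intro z hz
  rcases hH.up_mem_eq2 ha hx hx (fun z hz h' => Or.inl (h z hz h')) z hz with h' | h' <;>
    exact h'

lemma HSTModel.up_mem_or_eq (hH : HSTModel mem stP) {a b c : M} (ha : stP a) (hb : stP b)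
    (hc : stP c) (h : ∀ z, stP z → mem z a → (mem z b ∨ z = c)) :
    ∀ z, mem z a → (mem z b ∨ z = c) := by
  have hEv : ∀ w : M, EvalIn mem FalseC (Internal mem stP) p5F (Fin.snoc ![a, b, c] w) ↔
      (mem w a ∧ ¬(mem w b ∨ w = c)) := by
    intro w; simp only [p5F, eval_and, eval_not, eval_orF, eval_mem, eval_eq, Fin.snoc_castSucc, Fin.snoc_last, Matrix.cons_val_zero, Matrix.cons_val_one, Matrix.head_cons, Matrix.cons_val_two, Matrix.tail_cons]
  intro z hz
  by_contra hcon
  exact hH.transfer_all p5F ⟨trivial, ⟨trivial, trivial⟩⟩ ![a, b, c]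
    (fun i => by fin_cases i <;> assumption)
    (fun w hw hE' => by
      obtain ⟨h1, h2⟩ := (hEv w).1 hE'
      exact h2 (h w hw h1)) z (hH.mem_st_int ha hz) ((hEv z).2 ⟨hz, hcon⟩)

lemma HSTModel.up_mem_or_mem (hH : HSTModel mem stP) {a b c : M} (ha : stP a) (hb : stP b)
    (hc : stP c) (h : ∀ z, stP z → mem z a → (mem z b ∨ mem z c)) :
    ∀ z, mem z a → (mem z b ∨ mem z c) := by
  have hEv : ∀ w : M, EvalIn mem FalseC (Internal mem stP) p6F (Fin.snoc ![a, b, c] w) ↔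
      (mem w a ∧ ¬(mem w b ∨ mem w c)) := by
    intro w; simp only [p6F, eval_and, eval_not, eval_orF, eval_mem, eval_eq, Fin.snoc_castSucc, Fin.snoc_last, Matrix.cons_val_zero, Matrix.cons_val_one, Matrix.head_cons, Matrix.cons_val_two, Matrix.tail_cons]
  intro z hz
  by_contra hcon
  exact hH.transfer_all p6F ⟨trivial, ⟨trivial, trivial⟩⟩ ![a, b, c]
    (fun i => by fin_cases i <;> assumption)
    (fun w hw hE' => by
      obtain ⟨h1, h2⟩ := (hEv w).1 hE'
      exact h2 (h w hw h1)) z (hH.mem_st_int ha hz) ((hEv z).2 ⟨hz, hcon⟩)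

lemma HSTModel.up_sub (hH : HSTModel mem stP) {a b : M} (ha : stP a) (hb : stP b)
    (h : ∀ z, stP z → mem z a → mem z b) : ∀ z, mem z a → mem z b := by
  intro z hz
  rcases hH.up_mem_or_mem ha hb hb (fun z hz h' => Or.inl (h z hz h')) z hz with h' | h' <;>
    exact h'

end ModelLemmas

section Constructions
variable {M : Type u} {mem : M → M → Prop} {stP : M → Prop}

def falseF : StFormula 1 := .not (.eq (Fin.last 0) (Fin.last 0))

lemma HSTModel.sEmpty (hH : HSTModel mem stP) : ∃ e, stP e ∧ ∀ z, ¬ mem z e := by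
  obtain ⟨x, hx⟩ := hH.zfc_st.nonemp
  obtain ⟨e, he, hsep⟩ := hH.zfc_st.separation falseF trivial Fin.elim0
    (fun i => i.elim0) x hx
  refine ⟨e, he, hH.up_empty he (fun z hz hze => ?_)⟩
  have h2 := ((hsep z hz).1 hze).2
  rw [falseF, eval_not, eval_eq] at h2
  exact h2 rfl

lemma HSTModel.sUPair (hH : HSTModel mem stP) {x y : M} (hx : stP x) (hy : stP y) :
    ∃ p, stP p ∧ UPairIn mem TrueC p x y := by
  obtain ⟨p, hp, hup⟩ := hH.zfc_st.pair x y hx hy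
  have h1 : ∀ z, mem z p → (z = x ∨ z = y) :=
    hH.up_mem_eq2 hp hx hy (fun z hz h => (hup z hz).1 h)
  refine ⟨p, hp, fun z _ => ⟨h1 z, ?_⟩⟩
  intro h
  rcases h with h | h <;> rw [h]
  exacts [(hup x hx).2 (Or.inl rfl), (hup y hy).2 (Or.inr rfl)]

lemma HSTModel.sSing (hH : HSTModel mem stP) {x : M} (hx : stP x) :
    ∃ s, stP s ∧ SingIn mem TrueC s x := by
  obtain ⟨s, hs, hup⟩ := hH.sUPair hx hx
  exact ⟨s, hs, fun z _ => by have := hup z trivial; tauto⟩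

lemma HSTModel.sUnion2 (hH : HSTModel mem stP) {a b : M} (ha : stP a) (hb : stP b) :
    ∃ u, stP u ∧ ∀ z, mem z u ↔ (mem z a ∨ mem z b) := by
  obtain ⟨w, hw, hwp⟩ := hH.zfc_st.pair a b ha hb
  obtain ⟨u, hu, huu⟩ := hH.zfc_st.union w hw
  have fwd : ∀ z, mem z u → (mem z a ∨ mem z b) :=
    hH.up_mem_or_mem hu ha hb (fun z hz hzu => by
      obtain ⟨y, hy, hyw, hzy⟩ := (huu z hz).1 hzu
      rcases (hwp y hy).1 hyw with rfl | rfl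
      exacts [Or.inl hzy, Or.inr hzy])
  have bwa : ∀ z, mem z a → mem z u := hH.up_sub ha hu (fun z hz hza =>
    (huu z hz).2 ⟨a, ha, (hwp a ha).2 (Or.inl rfl), hza⟩)
  have bwb : ∀ z, mem z b → mem z u := hH.up_sub hb hu (fun z hz hzb =>
    (huu z hz).2 ⟨b, hb, (hwp b hb).2 (Or.inr rfl), hzb⟩)
  exact ⟨u, hu, fun z => ⟨fwd z, fun h => h.elim (bwa z) (bwb z)⟩⟩

lemma HSTModel.sSucc (hH : HSTModel mem stP) {x : M} (hx : stP x) :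
    ∃ s, stP s ∧ SuccIn mem TrueC s x := by
  obtain ⟨t, ht, hts⟩ := hH.sSing hx
  obtain ⟨s, hs, hsu⟩ := hH.sUnion2 hx ht
  refine ⟨s, hs, fun z _ => ?_⟩
  rw [hsu z]
  have := hts z trivial
  tauto

lemma HSTModel.hSing (hH : HSTModel mem stP) (x : M) : ∃ s, SingIn mem TrueC s x := by
  obtain ⟨s, hs⟩ := hH.pairing x x
  exact ⟨s, fun z hz => by have := hs z trivial; tauto⟩

lemma HSTModel.hOPair (hH : HSTModel mem stP) (x y : M) : ∃ p, OPairIn mem TrueC p x y := by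
  obtain ⟨s, hs⟩ := hH.hSing x
  obtain ⟨t, ht⟩ := hH.pairing x y
  obtain ⟨p, hp⟩ := hH.pairing s t
  exact ⟨p, s, t, trivial, trivial, hs, ht, hp⟩

lemma HSTModel.hSucc (hH : HSTModel mem stP) (x : M) : ∃ s, SuccIn mem TrueC s x := by
  obtain ⟨t, hts⟩ := hH.hSing x
  obtain ⟨w, hw⟩ := hH.pairing x t
  obtain ⟨u, hu⟩ := hH.union w
  refine ⟨u, fun z _ => ?_⟩
  rw [hu z]
  constructor
  · rintro ⟨y, hyw, hzy⟩
    rcases (hw y trivial).1 hyw with rfl | rfl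
    exacts [Or.inl hzy, Or.inr ((hts z trivial).1 hzy)]
  · intro h
    rcases h with hzx | h
    · exact ⟨x, (hw x trivial).2 (Or.inl rfl), hzx⟩
    · exact ⟨t, (hw t trivial).2 (Or.inr rfl), (hts z trivial).2 h⟩

/-! ### Kuratowski pair lemmas -/

lemma HSTModel.opair_ext (hH : HSTModel mem stP) {p q x y : M}
    (h : OPairIn mem TrueC p x y) (h' : OPairIn mem TrueC q x y) : p = q := by
  obtain ⟨s, t, -, -, hs, ht, hp⟩ := h
  obtain ⟨s', t', -, -, hs', ht', hq⟩ := h'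
  have hss : s = s' := hH.ext s s' (fun z => (hs z trivial).trans (hs' z trivial).symm)
  have htt : t = t' := hH.ext t t' (fun z => (ht z trivial).trans (ht' z trivial).symm)
  subst hss; subst htt
  exact hH.ext p q (fun z => (hp z trivial).trans (hq z trivial).symm)

lemma HSTModel.opair_inj (hH : HSTModel mem stP) {p x y x' y' : M}
    (h : OPairIn mem TrueC p x y) (h' : OPairIn mem TrueC p x' y') : x = x' ∧ y = y' := by
  obtain ⟨s, t, -, -, hs, ht, hp⟩ := h
  obtain ⟨s', t', -, -, hs', ht', hp'⟩ := h'
  have hsmem : ∀ z, mem z s ↔ z = x := fun z => hs z trivial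
  have htmem : ∀ z, mem z t ↔ (z = x ∨ z = y) := fun z => ht z trivial
  have hpmem : ∀ z, mem z p ↔ (z = s ∨ z = t) := fun z => hp z trivial
  have hsmem' : ∀ z, mem z s' ↔ z = x' := fun z => hs' z trivial
  have htmem' : ∀ z, mem z t' ↔ (z = x' ∨ z = y') := fun z => ht' z trivial
  have hpmem' : ∀ z, mem z p ↔ (z = s' ∨ z = t') := fun z => hp' z trivial
  have hs'p : mem s' p := (hpmem' s').2 (Or.inl rfl)
  have hxx : x = x' := by
    rcases (hpmem s').1 hs'p with rfl | rfl
    · exact ((hsmem x').1 ((hsmem' x').2 rfl)).symm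
    · exact (hsmem' x).1 ((htmem x).2 (Or.inl rfl))
  refine ⟨hxx, ?_⟩
  subst hxx
  have ht'p : mem t' p := (hpmem' t').2 (Or.inr rfl)
  have hy't' : mem y' t' := (htmem' y').2 (Or.inr rfl)
  have hyt : mem y t := (htmem y).2 (Or.inr rfl)
  rcases (hpmem t').1 ht'p with ht's | ht't
  · -- t' = s
    have hy'x : y' = x := (hsmem y').1 (ht's ▸ hy't')
    have htp : mem t p := (hpmem t).2 (Or.inr rfl)
    rcases (hpmem' t).1 htp with hts' | htt'
    · exact ((hsmem' y).1 (hts' ▸ hyt)).trans hy'x.symm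
    · exact ((hsmem y).1 ((htt'.trans ht's) ▸ hyt)).trans hy'x.symm
  · -- t' = t
    rcases (htmem y').1 (ht't ▸ hy't') with hy'1 | hy'2
    · rcases (htmem' y).1 (ht't ▸ hyt) with h1 | h2
      · exact h1.trans hy'1.symm
      · exact h2
    · exact hy'2.symm

lemma pairSem_trueC {M : Type u} {mem : M → M → Prop} {p x y : M} :
    PairSem mem TrueC p x y ↔ OPairIn mem TrueC p x y := by
  constructor
  · rintro ⟨s, -, t, -, h1, h2, h3⟩
    exact ⟨s, t, trivial, trivial, h1, h2, h3⟩
  · rintro ⟨s, t, -, -, h1, h2, h3⟩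
    exact ⟨s, trivial, t, trivial, h1, h2, h3⟩

lemma HSTModel.pairSem_int (hH : HSTModel mem stP) {p x y : M}
    (hp : Internal mem stP p) (hx : Internal mem stP x) (hy : Internal mem stP y)
    (hsem : PairSem mem (Internal mem stP) p x y) : OPairIn mem TrueC p x y := by
  obtain ⟨s, hsi, t, hti, h1, h2, h3⟩ := hsem
  refine ⟨s, t, trivial, trivial, fun z _ => ?_, fun z _ => ?_, fun z _ => ?_⟩
  · constructor
    · intro hz; exact (h1 z (hH.mem_int hsi hz)).1 hz
    · intro h; rw [h]; exact (h1 x hx).2 rfl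
  · constructor
    · intro hz; exact (h2 z (hH.mem_int hti hz)).1 hz
    · intro h; rcases h with h | h <;> rw [h]
      exacts [(h2 x hx).2 (Or.inl rfl), (h2 y hy).2 (Or.inr rfl)]
  · constructor
    · intro hz; exact (h3 z (hH.mem_int hp hz)).1 hz
    · intro h; rcases h with h | h <;> rw [h]
      exacts [(h3 s hsi).2 (Or.inl rfl), (h3 t hti).2 (Or.inr rfl)]

lemma HSTModel.int_pairSem (hH : HSTModel mem stP) {p x y : M}
    (hp : Internal mem stP p) (h : OPairIn mem TrueC p x y) :
    PairSem mem (Internal mem stP) p x y := by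
  obtain ⟨s, t, -, -, h1, h2, h3⟩ := h
  have hsi : Internal mem stP s := hH.mem_int hp ((h3 s trivial).2 (Or.inl rfl))
  have hti : Internal mem stP t := hH.mem_int hp ((h3 t trivial).2 (Or.inr rfl))
  exact ⟨s, hsi, t, hti, fun z _ => h1 z trivial, fun z _ => h2 z trivial,
    fun z _ => h3 z trivial⟩

lemma HSTModel.pair_up (hH : HSTModel mem stP) {p x y : M} (hp : stP p) (hx : stP x)
    (hy : stP y) (h : OPairIn mem stP p x y) : OPairIn mem TrueC p x y := by
  obtain ⟨s, t, hsst, htst, h1, h2, h3⟩ := h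
  refine ⟨s, t, trivial, trivial, fun z _ => ⟨?_, ?_⟩, fun z _ => ⟨?_, ?_⟩,
    fun z _ => ⟨?_, ?_⟩⟩
  · exact fun hz => hH.up_mem_eq hsst hx (fun u hu h' => (h1 u hu).1 h') z hz
  · intro h; rw [h]; exact (h1 x hx).2 rfl
  · exact fun hz => hH.up_mem_eq2 htst hx hy (fun u hu h' => (h2 u hu).1 h') z hz
  · intro h; rcases h with h | h <;> rw [h]
    exacts [(h2 x hx).2 (Or.inl rfl), (h2 y hy).2 (Or.inr rfl)]
  · exact fun hz => hH.up_mem_eq2 hp hsst htst (fun u hu h' => (h3 u hu).1 h') z hz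
  · intro h; rcases h with h | h <;> rw [h]
    exacts [(h3 s hsst).2 (Or.inl rfl), (h3 t htst).2 (Or.inr rfl)]

lemma HSTModel.pair_down (hH : HSTModel mem stP) {p x y : M} (hx : stP x) (hy : stP y)
    (h : OPairIn mem TrueC p x y) : stP p ∧ OPairIn mem stP p x y := by
  obtain ⟨s, t, -, -, h1, h2, h3⟩ := h
  obtain ⟨s0, hs0, hs0s⟩ := hH.sSing hx
  obtain ⟨t0, ht0, ht0s⟩ := hH.sUPair hx hy
  have hss0 : s = s0 := hH.ext s s0 (fun z => (h1 z trivial).trans (hs0s z trivial).symm)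
  have htt0 : t = t0 := hH.ext t t0 (fun z => (h2 z trivial).trans (ht0s z trivial).symm)
  subst hss0; subst htt0
  obtain ⟨p0, hp0, hp0s⟩ := hH.sUPair hs0 ht0
  have hpp0 : p = p0 := hH.ext p p0 (fun z => (h3 z trivial).trans (hp0s z trivial).symm)
  subst hpp0
  exact ⟨hp0, s, t, hs0, ht0, fun z _ => h1 z trivial, fun z _ => h2 z trivial,
    fun z _ => h3 z trivial⟩

end Constructions

section StepA
variable {M : Type u} {mem : M → M → Prop} {stP : M → Prop}

/-- `st k ∧ ∃ u ∈ k, ¬ st u` -/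
def psiA : StFormula 1 :=
  .and (.st (Fin.last 0))
    (exF (.and (.mem (Fin.last 1) ((Fin.last 0).castSucc)) (.not (.st (Fin.last 1)))))

lemma eval_psiA {k : M} :
    EvalIn mem stP TrueC psiA (Fin.snoc Fin.elim0 k) ↔
      (stP k ∧ ∃ u, mem u k ∧ ¬ stP u) := by
  simp only [psiA, eval_and, eval_st, eval_exF, eval_not, eval_mem,
    Fin.snoc_castSucc, Fin.snoc_last, TrueC, true_and]

/-- every element of a standard natural number of `S` is standard -/
lemma HSTModel.stepA (hH : HSTModel mem stP) {n : M} (hn : stP n)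
    (hnat : NatIn mem stP n) : ∀ x, mem x n → stP x := by
  by_contra hc
  push_neg at hc
  obtain ⟨x0, hx0n, hx0⟩ := hc
  obtain ⟨np, hnp, hnps⟩ := hH.sSucc hn
  obtain ⟨s', hs'⟩ := hH.separation psiA Fin.elim0 np
  obtain ⟨Y, hY, hYs⟩ := hH.standardization s'
  have hnY : mem n Y := (hYs n hn).2 ((hs' n).2
    ⟨(hnps n trivial).2 (Or.inr rfl), eval_psiA.2 ⟨hn, x0, hx0n, hx0⟩⟩)
  obtain ⟨k0, hk0st, hk0Y, hk0min⟩ := hH.zfc_st.foundation Y hY ⟨n, hn, hnY⟩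
  obtain ⟨hk0np, hk0E⟩ := (hs' k0).1 ((hYs k0 hk0st).1 hk0Y)
  obtain ⟨-, u0, hu0k0, hu0⟩ := eval_psiA.1 hk0E
  have hk0cases : mem k0 n ∨ k0 = n := (hnps k0 trivial).1 hk0np
  rcases hnat.2 k0 hk0st hk0cases.symm with hemp | ⟨z, hzst, hzsucc⟩
  · exact hH.up_empty hk0st hemp u0 hu0k0
  · have hzk0 : mem z k0 := (hzsucc z hzst).2 (Or.inr rfl)
    have hup : ∀ u, mem u k0 → (mem u z ∨ u = z) :=
      hH.up_mem_or_eq hk0st hzst hzst (fun u hu h' => (hzsucc u hu).1 h')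
    have hu0z : mem u0 z := by
      rcases hup u0 hu0k0 with h | h
      · exact h
      · exact absurd (h ▸ hzst) hu0
    have hzn : mem z np := by
      rcases hk0cases with hk0n | hk0n
      · exact (hnps z trivial).2 (Or.inl (hnat.1.1 k0 hk0st hk0n z hzst hzk0))
      · exact (hnps z trivial).2 (Or.inl (hk0n ▸ hzk0))
    have hzY : mem z Y := (hYs z hzst).2 ((hs' z).2
      ⟨hzn, eval_psiA.2 ⟨hzst, u0, hu0z, hu0⟩⟩)
    exact hk0min z hzst hzk0 hzY

end StepA

section Dir1
variable {M : Type u} {mem : M → M → Prop} {stP : M → Prop}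

/-- `x ∈ X ∧ ¬ ∃ j ∈ n, f(x) = j`, parameters `X f n`, free variable `x`. -/
def t1F : StFormula 4 :=
  .and (.mem (Fin.last 3) ((0 : Fin 3).castSucc))
    (.not (exF (.and (.mem (Fin.last 4) ((2 : Fin 3).castSucc.castSucc))
      (fvalF ((1 : Fin 3).castSucc.castSucc) ((Fin.last 3).castSucc) (Fin.last 4)))))

lemma eval_t1F {C : M → Prop} {X f n w : M} :
    EvalIn mem FalseC C t1F (Fin.snoc ![X, f, n] w) ↔
      (mem w X ∧ ¬ ∃ j, C j ∧ mem j n ∧ ∃ q, C q ∧ mem q f ∧ PairSem mem C q w j) := by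
  simp only [t1F, eval_and, eval_mem, eval_not, eval_exF, eval_fvalF,
    Fin.snoc_castSucc, Fin.snoc_last, Matrix.cons_val_zero, Matrix.cons_val_one,
    Matrix.head_cons, Matrix.cons_val_two, Matrix.tail_cons]

lemma isEps_t1F : t1F.IsEpsilon :=
  isEps_and trivial (isEps_not (isEps_exF (isEps_and trivial (isEps_fvalF _ _ _))))

/-- `x ∈ X ∧ x ≠ a ∧ f(x) = j`, parameters `X f j a`, free variable `x`. -/
def t2F : StFormula 5 :=
  .and (.mem (Fin.last 4) ((0 : Fin 4).castSucc))
    (.and (.not (.eq (Fin.last 4) ((3 : Fin 4).castSucc)))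
      (fvalF ((1 : Fin 4).castSucc) (Fin.last 4) ((2 : Fin 4).castSucc)))

lemma eval_t2F {C : M → Prop} {X f j a w : M} :
    EvalIn mem FalseC C t2F (Fin.snoc ![X, f, j, a] w) ↔
      (mem w X ∧ ¬ w = a ∧ ∃ q, C q ∧ mem q f ∧ PairSem mem C q w j) := by
  simp only [t2F, eval_and, eval_mem, eval_not, eval_eq, eval_fvalF,
    Fin.snoc_castSucc, Fin.snoc_last, Matrix.cons_val_zero, Matrix.cons_val_one,
    Matrix.head_cons, Matrix.cons_val_two, Matrix.tail_cons, Matrix.cons_val_three]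

lemma isEps_t2F : t2F.IsEpsilon :=
  isEps_and trivial (isEps_and (isEps_not trivial) (isEps_fvalF _ _ _))

/-- Direction 1: a standard set `S`-equinumerous to a standard `S`-natural
number has only standard elements. -/
lemma HSTModel.dir1 (hH : HSTModel mem stP) {X n f : M} (hX : stP X) (hn : stP n)
    (hf : stP f) (hnat : NatIn mem stP n)
    (hfun : FuncOnIn mem stP f (fun z => mem z X))
    (hinj : ∀ a b w, stP a → stP b → stP w →
      FValIn mem stP f a w → FValIn mem stP f b w → a = b)
    (hsur : ∀ w, stP w → (mem w n ↔ ∃ a, stP a ∧ mem a X ∧ FValIn mem stP f a w)) :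
    ∀ x, mem x X → stP x := by
  intro x0 hx0
  have hx0int : Internal mem stP x0 := hH.mem_st_int hX hx0
  -- every element of `X` has an `f`-value in `n`
  have hT1 := hH.transfer_all t1F isEps_t1F ![X, f, n]
    (fun i => by fin_cases i <;> assumption)
    (fun x hx hE => by
      obtain ⟨hxX, hne⟩ := eval_t1F.1 hE
      obtain ⟨y, hyst, hyval⟩ := hfun.2.1 x hx hxX
      obtain ⟨p, hpst, hpf, hOP⟩ := hyval
      exact hne ⟨y, hH.st_int hyst, (hsur y hyst).2 ⟨x, hx, hxX, p, hpst, hpf, hOP⟩,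
        p, hH.st_int hpst, hpf,
        hH.int_pairSem (hH.st_int hpst) (hH.pair_up hpst hx hyst hOP)⟩)
    x0 hx0int
  rw [eval_t1F] at hT1
  push_neg at hT1
  obtain ⟨j, hjint, hjn, q, hqint, hqf, hsem⟩ := hT1 hx0
  have hjst : stP j := hH.stepA hn hnat j hjn
  obtain ⟨a, hast, haX, hfa⟩ := (hsur j hjst).1 hjn
  suffices hxa : x0 = a by rw [hxa]; exact hast
  by_contra hne
  obtain ⟨x1, hx1st, hE1⟩ := (hH.transfer t2F isEps_t2F ![X, f, j, a]
    (fun i => by fin_cases i <;> assumption)).1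
    ⟨x0, hx0int, eval_t2F.2 ⟨hx0, hne, q, hqint, hqf, hsem⟩⟩
  obtain ⟨hx1X, hx1ne, q1, hq1int, hq1f, hsem1⟩ := eval_t2F.1 hE1
  have hOP1 : OPairIn mem TrueC q1 x1 j :=
    hH.pairSem_int hq1int (hH.st_int hx1st) (hH.st_int hjst) hsem1
  obtain ⟨hq1st, hOP1st⟩ := hH.pair_down hx1st hjst hOP1
  exact hx1ne (hinj x1 a j hx1st hast hjst ⟨q1, hq1st, hq1f, hOP1st⟩ hfa)

end Dir1

section HNat
variable {M : Type u} {mem : M → M → Prop} {stP : M → Prop}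

def memPF : StFormula 2 := .mem (Fin.last 1) ((0 : Fin 1).castSucc)

lemma eval_memPF {n z : M} :
    EvalIn mem stP TrueC memPF (Fin.snoc ![n] z) ↔ mem z n := by
  simp only [memPF, eval_mem, Fin.snoc_castSucc, Fin.snoc_last, Matrix.cons_val_zero]

def nstF : StFormula 1 := .not (.st (Fin.last 0))

lemma eval_nstF {z : M} :
    EvalIn mem stP TrueC nstF (Fin.snoc Fin.elim0 z) ↔ ¬ stP z := by
  simp only [nstF, eval_not, eval_st, Fin.snoc_last]

/-- `∈`-minimality over arbitrary subsets of `n ∪ {n}` for an `H`-natural `n`. -/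
lemma HSTModel.hnat_wfsucc (hH : HSTModel mem stP) {n np : M} (hnat : NatIn mem TrueC n)
    (hnps : SuccIn mem TrueC np n) :
    ∀ Y, (∃ w, mem w Y) → (∀ z, mem z Y → mem z np) →
      ∃ w, mem w Y ∧ ∀ u, mem u w → ¬ mem u Y := by
  intro Y hne hsub
  obtain ⟨Y', hY'⟩ := hH.separation memPF ![n] Y
  have hY'iff : ∀ z, mem z Y' ↔ (mem z Y ∧ mem z n) := by
    intro z; rw [hY' z, eval_memPF]
  by_cases hcase : ∃ w, mem w Y'
  · obtain ⟨w0, hw0⟩ := hcase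
    obtain ⟨w, -, hwY', hwmin⟩ := hnat.1.2.2.2.2 Y' trivial
      (fun z _ hz => ((hY'iff z).1 hz).2) ⟨w0, trivial, hw0⟩
    obtain ⟨hwY, hwn⟩ := (hY'iff w).1 hwY'
    refine ⟨w, hwY, fun u hu huY => ?_⟩
    exact hwmin u trivial hu ((hY'iff u).2 ⟨huY, hnat.1.1 w trivial hwn u trivial hu⟩)
  · obtain ⟨w, hwY⟩ := hne
    have hwn : w = n := by
      rcases (hnps w trivial).1 (hsub w hwY) with h | h
      · exact absurd ⟨w, (hY'iff w).2 ⟨hwY, h⟩⟩ hcase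
      · exact h
    refine ⟨w, hwY, fun u hu huY => ?_⟩
    rcases (hnps u trivial).1 (hsub u huY) with h | h
    · exact hcase ⟨u, (hY'iff u).2 ⟨huY, h⟩⟩
    · have hnn : mem n n := by rw [h, hwn] at hu; exact hu
      exact (hnat.1.2.2.2.1 n trivial hnn) hnn

/-- every `H`-natural number, and every element of it, is standard. -/
lemma HSTModel.hnat_elts_st (hH : HSTModel mem stP) {n : M} (hnat : NatIn mem TrueC n) :
    ∀ x, (mem x n ∨ x = n) → stP x := by
  obtain ⟨np, hnps⟩ := hH.hSucc n
  obtain ⟨Cs, hCs⟩ := hH.separation nstF Fin.elim0 np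
  have hCsiff : ∀ z, mem z Cs ↔ (mem z np ∧ ¬ stP z) := by
    intro z; rw [hCs z, eval_nstF]
  suffices hempty : ∀ z, ¬ mem z Cs by
    intro x hx
    have hxnp : mem x np := (hnps x trivial).2 hx
    by_contra hxst
    exact hempty x ((hCsiff x).2 ⟨hxnp, hxst⟩)
  by_contra hne
  push_neg at hne
  obtain ⟨k1, hk1⟩ := hne
  obtain ⟨k0, hk0Cs, hk0min⟩ := hH.hnat_wfsucc hnat hnps Cs ⟨k1, hk1⟩
    (fun z hz => ((hCsiff z).1 hz).1)
  obtain ⟨hk0np, hk0nst⟩ := (hCsiff k0).1 hk0Cs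
  have helts : ∀ u, mem u k0 → stP u := by
    intro u hu
    by_contra hust
    have hun : mem u n := by
      rcases (hnps k0 trivial).1 hk0np with h | h
      · exact hnat.1.1 k0 trivial h u trivial hu
      · exact h ▸ hu
    exact hk0min u hu ((hCsiff u).2 ⟨(hnps u trivial).2 (Or.inl hun), hust⟩)
  rcases hnat.2 k0 trivial (Or.symm ((hnps k0 trivial).1 hk0np)) with hemp | ⟨z, -, hzsucc⟩
  · obtain ⟨e, hest, he⟩ := hH.sEmpty
    have : k0 = e := hH.ext k0 e
      (fun z => ⟨fun h => absurd h (hemp z trivial), fun h => absurd h (he z)⟩)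
    exact hk0nst (this ▸ hest)
  · have hzk0 : mem z k0 := (hzsucc z trivial).2 (Or.inr rfl)
    have hzst : stP z := helts z hzk0
    obtain ⟨zs, hzs, hzss⟩ := hH.sSucc hzst
    have : k0 = zs := hH.ext k0 zs
      (fun u => (hzsucc u trivial).trans (hzss u trivial).symm)
    exact hk0nst (this ▸ hzs)

/-- every `H`-natural number is an `S`-natural number. -/
lemma HSTModel.hnat_snat (hH : HSTModel mem stP) {n : M} (hnat : NatIn mem TrueC n) :
    NatIn mem stP n := by
  have hst := hH.hnat_elts_st hnat
  obtain ⟨⟨htr, hlin, htrans3, hirr, hwf⟩, hcl⟩ := hnat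
  refine ⟨⟨?_, ?_, ?_, ?_, ?_⟩, ?_⟩
  · exact fun y hy hyn z hz hzy => htr y trivial hyn z trivial hzy
  · exact fun y z hy hz hyn hzn => hlin y z trivial trivial hyn hzn
  · exact fun y z w hy hz hw h1 h2 h3 h4 h5 =>
      htrans3 y z w trivial trivial trivial h1 h2 h3 h4 h5
  · exact fun y hy hyn => hirr y trivial hyn
  · intro Y hY hsub hne
    obtain ⟨w, hwst, hwY⟩ := hne
    exact hH.zfc_st.foundation Y hY ⟨w, hwst, hwY⟩
  · intro y hy hcase
    rcases hcl y trivial hcase with hemp | ⟨z, -, hzs⟩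
    · exact Or.inl (fun z _ => hemp z trivial)
    · have hzy : mem z y := (hzs z trivial).2 (Or.inr rfl)
      have hzst : stP z := by
        rcases hcase with rfl | hyn
        · exact hst z (Or.inl hzy)
        · exact hst z (Or.inl (htr y trivial hyn z trivial hzy))
      exact Or.inr ⟨z, hzst, fun u _ => hzs u trivial⟩

end HNat

section Dir2a
variable {M : Type u} {mem : M → M → Prop} {stP : M → Prop}

/-- `¬ ∃ Y (st Y ∧ ∀ z (z ∈ Y ↔ z ∈ X ∧ ∃ j ∈ k, f(z) = j))`,
parameters `X f`, free variable `k`. -/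
def d2aF : StFormula 3 :=
  .not (exF (.and (.st (Fin.last 3))
    (.all (.and
      (impF (.mem (Fin.last 4) ((Fin.last 3).castSucc))
            (.and (.mem (Fin.last 4) ((0 : Fin 2).castSucc.castSucc.castSucc))
              (exF (.and (.mem (Fin.last 5) ((Fin.last 2).castSucc.castSucc.castSucc))
                (fvalF ((1 : Fin 2).castSucc.castSucc.castSucc.castSucc)
                       ((Fin.last 4).castSucc) (Fin.last 5))))))
      (impF (.and (.mem (Fin.last 4) ((0 : Fin 2).castSucc.castSucc.castSucc))
              (exF (.and (.mem (Fin.last 5) ((Fin.last 2).castSucc.castSucc.castSucc))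
                (fvalF ((1 : Fin 2).castSucc.castSucc.castSucc.castSucc)
                       ((Fin.last 4).castSucc) (Fin.last 5)))))
            (.mem (Fin.last 4) ((Fin.last 3).castSucc)))))))

lemma eval_d2aF {X f k : M} :
    EvalIn mem stP TrueC d2aF (Fin.snoc ![X, f] k) ↔
      ¬ ∃ Y, stP Y ∧ ∀ z, (mem z Y ↔ (mem z X ∧
        ∃ j, mem j k ∧ ∃ q, mem q f ∧ PairSem mem TrueC q z j)) := by
  simp only [d2aF, eval_not, eval_exF, eval_and, eval_st, eval_all, eval_impF, eval_mem,
    eval_fvalF, Fin.snoc_castSucc, Fin.snoc_last, Matrix.cons_val_zero, Matrix.cons_val_one,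
    Matrix.head_cons, TrueC, true_and, true_implies, ← iff_def]

/-- Direction 2a: a set of standard elements which is `H`-equinumerous to an
`H`-natural number is standard. -/
lemma HSTModel.dir2a (hH : HSTModel mem stP) {X n f : M} (hXS : ∀ y, mem y X → stP y)
    (hnat : NatIn mem TrueC n)
    (hfun : FuncOnIn mem TrueC f (fun z => mem z X))
    (hinj : ∀ a b w, TrueC a → TrueC b → TrueC w →
      FValIn mem TrueC f a w → FValIn mem TrueC f b w → a = b)
    (hsur : ∀ w, TrueC w → (mem w n ↔ ∃ a, TrueC a ∧ mem a X ∧ FValIn mem TrueC f a w)) :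
    stP X := by
  obtain ⟨np, hnps⟩ := hH.hSucc n
  obtain ⟨Cs, hCs⟩ := hH.separation d2aF ![X, f] np
  have hCsE : ∀ k, ¬ mem k Cs := by
    by_contra hne
    push_neg at hne
    obtain ⟨k1, hk1⟩ := hne
    obtain ⟨k0, hk0Cs, hk0min⟩ := hH.hnat_wfsucc hnat hnps Cs ⟨k1, hk1⟩
      (fun z hz => ((hCs z).1 hz).1)
    obtain ⟨hk0np, hk0E⟩ := (hCs k0).1 hk0Cs
    rw [eval_d2aF] at hk0E
    rcases hnat.2 k0 trivial (Or.symm ((hnps k0 trivial).1 hk0np)) with hemp | ⟨k, -, hksucc⟩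
    · obtain ⟨e, hest, he⟩ := hH.sEmpty
      exact hk0E ⟨e, hest, fun z => ⟨fun h => absurd h (he z),
        fun ⟨_, j, hjk0, _⟩ => absurd hjk0 (hemp j trivial)⟩⟩
    · have hkk0 : mem k k0 := (hksucc k trivial).2 (Or.inr rfl)
      have hkn : mem k n := by
        rcases (hnps k0 trivial).1 hk0np with h | h
        · exact hnat.1.1 k0 trivial h k trivial hkk0
        · exact h ▸ hkk0
      obtain ⟨Yk, hYkst, hYk⟩ : ∃ Y, stP Y ∧ ∀ z, (mem z Y ↔ (mem z X ∧
          ∃ j, mem j k ∧ ∃ q, mem q f ∧ PairSem mem TrueC q z j)) := by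
        by_contra hno
        exact hk0min k hkk0 ((hCs k).2
          ⟨(hnps k trivial).2 (Or.inl hkn), eval_d2aF.2 hno⟩)
      obtain ⟨x0, -, hx0X, hfx0⟩ := (hsur k trivial).1 hkn
      have hx0st : stP x0 := hXS x0 hx0X
      obtain ⟨sx, hsxst, hsxs⟩ := hH.sSing hx0st
      obtain ⟨Y', hY'st, hY's⟩ := hH.sUnion2 hYkst hsxst
      apply hk0E
      refine ⟨Y', hY'st, fun z => ⟨?_, ?_⟩⟩
      · intro hzY'
        rcases (hY's z).1 hzY' with hzYk | hzsx
        · obtain ⟨hzX, j, hjk, hq⟩ := (hYk z).1 hzYk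
          exact ⟨hzX, j, (hksucc j trivial).2 (Or.inl hjk), hq⟩
        · have hzx0 : z = x0 := (hsxs z trivial).1 hzsx
          obtain ⟨q, -, hqf, hOP⟩ := hfx0
          refine ⟨hzx0 ▸ hx0X, k, (hksucc k trivial).2 (Or.inr rfl),
            q, hqf, hzx0 ▸ (pairSem_trueC.2 hOP)⟩
      · rintro ⟨hzX, j, hjk0, q, hqf, hsem⟩
        rcases (hksucc j trivial).1 hjk0 with hjk | hjk
        · exact (hY's z).2 (Or.inl ((hYk z).2 ⟨hzX, j, hjk, q, hqf, hsem⟩))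
        · have hfz : FValIn mem TrueC f z k :=
            ⟨q, trivial, hqf, hjk ▸ pairSem_trueC.1 hsem⟩
          have hzx0 : z = x0 := hinj z x0 k trivial trivial trivial hfz hfx0
          exact (hY's z).2 (Or.inr ((hsxs z trivial).2 hzx0))
  obtain ⟨Y, hYst, hY⟩ : ∃ Y, stP Y ∧ ∀ z, (mem z Y ↔ (mem z X ∧
      ∃ j, mem j n ∧ ∃ q, mem q f ∧ PairSem mem TrueC q z j)) := by
    by_contra hno
    exact hCsE n ((hCs n).2 ⟨(hnps n trivial).2 (Or.inr rfl), eval_d2aF.2 hno⟩)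
  have hXY : X = Y := hH.ext X Y (fun z => ⟨fun hz => (hY z).2 ⟨hz, by
      obtain ⟨j, -, hfj⟩ := hfun.2.1 z trivial hz
      obtain ⟨q, -, hqf, hOP⟩ := hfj
      exact ⟨j, (hsur j trivial).2 ⟨z, trivial, hz, q, trivial, hqf, hOP⟩,
        q, hqf, pairSem_trueC.2 hOP⟩⟩,
    fun hz => ((hY z).1 hz).1⟩)
  exact hXY ▸ hYst

end Dir2a

section Dir2b
variable {M : Type u} {mem : M → M → Prop} {stP : M → Prop}

/-- `∃ a j, p = ⟨a, j⟩ ∧ q = ⟨p, j⟩`, free variables `p q` (for Replacement). -/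
def gF : StFormula 2 :=
  exF (exF (.and
    (pairF ((Fin.last 0).castSucc.castSucc.castSucc) ((Fin.last 2).castSucc) (Fin.last 3))
    (pairF ((Fin.last 1).castSucc.castSucc)
      ((Fin.last 0).castSucc.castSucc.castSucc) (Fin.last 3))))

lemma eval_gF {p q : M} :
    EvalIn mem stP TrueC gF (Fin.snoc (Fin.snoc Fin.elim0 p) q) ↔
      ∃ a j, OPairIn mem TrueC p a j ∧ OPairIn mem TrueC q p j := by
  simp only [gF, eval_exF, eval_and, eval_pairF, Fin.snoc_castSucc, Fin.snoc_last,
    TrueC, true_and, pairSem_trueC]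

/-- the "second projection" is an `H`-bijection of `f` onto `n`. -/
lemma HSTModel.f_equinum (hH : HSTModel mem stP) {X n f : M}
    (hfun : FuncOnIn mem TrueC f (fun z => mem z X))
    (hinj : ∀ a b w, TrueC a → TrueC b → TrueC w →
      FValIn mem TrueC f a w → FValIn mem TrueC f b w → a = b)
    (hsur : ∀ w, TrueC w → (mem w n ↔ ∃ a, TrueC a ∧ mem a X ∧ FValIn mem TrueC f a w)) :
    EquinumIn mem TrueC f n := by
  obtain ⟨B, hB⟩ := hH.replacement gF Fin.elim0 f (by
    intro p q q' h1 h2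
    rw [eval_gF] at h1 h2
    obtain ⟨a, j, hOPa, hOPq⟩ := h1
    obtain ⟨a', j', hOPa', hOPq'⟩ := h2
    obtain ⟨-, hj⟩ := hH.opair_inj hOPa hOPa'
    exact hH.opair_ext hOPq (hj ▸ hOPq'))
  have hBmem : ∀ qq, mem qq B ↔
      ∃ p j a, mem p f ∧ OPairIn mem TrueC p a j ∧ OPairIn mem TrueC qq p j := by
    intro qq
    rw [hB qq]
    constructor
    · rintro ⟨p, hpf, hE⟩
      rw [eval_gF] at hE
      obtain ⟨a, j, h1, h2⟩ := hE
      exact ⟨p, j, a, hpf, h1, h2⟩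
    · rintro ⟨p, j, a, hpf, h1, h2⟩
      exact ⟨p, hpf, eval_gF.2 ⟨a, j, h1, h2⟩⟩
  have hBval : ∀ p w, FValIn mem TrueC B p w ↔
      (mem p f ∧ ∃ a, OPairIn mem TrueC p a w) := by
    intro p w
    constructor
    · rintro ⟨qq, -, hqqB, hOP⟩
      obtain ⟨p1, j1, a1, hp1f, hOP1, hOPq⟩ := (hBmem qq).1 hqqB
      obtain ⟨hpe, hje⟩ := hH.opair_inj hOPq hOP
      exact ⟨hpe ▸ hp1f, a1, hpe ▸ hje ▸ hOP1⟩
    · rintro ⟨hpf, a, hOP⟩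
      obtain ⟨qq, hOPq⟩ := hH.hOPair p w
      exact ⟨qq, trivial, (hBmem qq).2 ⟨p, w, a, hpf, hOP, hOPq⟩, hOPq⟩
  refine ⟨B, trivial, ⟨?_, ?_, ?_⟩, ?_, ?_⟩
  · intro qq _ hqqB
    obtain ⟨p, j, a, hpf, hOP1, hOPq⟩ := (hBmem qq).1 hqqB
    exact ⟨p, j, trivial, trivial, hpf, hOPq⟩
  · intro p _ hpf
    obtain ⟨a, j, -, -, haX, hOP⟩ := hfun.1 p trivial hpf
    exact ⟨j, trivial, (hBval p j).2 ⟨hpf, a, hOP⟩⟩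
  · intro p y y' _ _ _ h1 h2
    obtain ⟨-, a, hOPa⟩ := (hBval p y).1 h1
    obtain ⟨-, a', hOPa'⟩ := (hBval p y').1 h2
    exact (hH.opair_inj hOPa hOPa').2
  · intro p p' w _ _ _ h1 h2
    obtain ⟨hpf, a, hOPa⟩ := (hBval p w).1 h1
    obtain ⟨hp'f, a', hOPa'⟩ := (hBval p' w).1 h2
    have haa : a = a' := hinj a a' w trivial trivial trivial
      ⟨p, trivial, hpf, hOPa⟩ ⟨p', trivial, hp'f, hOPa'⟩
    exact hH.opair_ext hOPa (haa ▸ hOPa')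
  · intro w _
    constructor
    · intro hwn
      obtain ⟨a, -, haX, p, -, hpf, hOP⟩ := (hsur w trivial).1 hwn
      exact ⟨p, trivial, hpf, (hBval p w).2 ⟨hpf, a, hOP⟩⟩
    · rintro ⟨p, -, hpf, hFv⟩
      obtain ⟨-, a, hOPa⟩ := (hBval p w).1 hFv
      obtain ⟨x, y, -, -, hxX, hOPxy⟩ := hfun.1 p trivial hpf
      obtain ⟨hax, hwy⟩ := hH.opair_inj hOPxy hOPa
      rw [hwy] at hOPxy
      exact (hsur w trivial).2 ⟨x, trivial, hxX, p, trivial, hpf, hOPxy⟩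

/-- Direction 2: a finite set of standard sets is standard and `S`-finite. -/
lemma HSTModel.dir2 (hH : HSTModel mem stP) {X n f : M} (hXS : ∀ y, mem y X → stP y)
    (hnat : NatIn mem TrueC n)
    (hfun : FuncOnIn mem TrueC f (fun z => mem z X))
    (hinj : ∀ a b w, TrueC a → TrueC b → TrueC w →
      FValIn mem TrueC f a w → FValIn mem TrueC f b w → a = b)
    (hsur : ∀ w, TrueC w → (mem w n ↔ ∃ a, TrueC a ∧ mem a X ∧ FValIn mem TrueC f a w)) :
    stP X ∧ FiniteIn mem stP X := by
  have hnst : ∀ x, (mem x n ∨ x = n) → stP x := hH.hnat_elts_st hnat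
  have hXst : stP X := hH.dir2a hXS hnat hfun hinj hsur
  -- elements of `f` are standard ordered pairs
  have hfS : ∀ p, mem p f → stP p := by
    intro p hpf
    obtain ⟨x, y, -, -, hxX, hOP⟩ := hfun.1 p trivial hpf
    have hyn : mem y n := (hsur y trivial).2 ⟨x, trivial, hxX, p, trivial, hpf, hOP⟩
    exact (hH.pair_down (hXS x hxX) (hnst y (Or.inl hyn)) hOP).1
  -- `f` is itself a finite set of standard sets, hence standard
  obtain ⟨B, -, hgfun, hginj, hgsur⟩ := hH.f_equinum hfun hinj hsur
  have hfst : stP f := hH.dir2a hfS hnat hgfun hginj hgsur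
  -- transport the equinumerosity to the standard universe
  have hfval_down : ∀ x y, mem x X → FValIn mem TrueC f x y →
      stP y ∧ FValIn mem stP f x y := by
    intro x y hxX hFv
    have hyn : mem y n := (hsur y trivial).2 ⟨x, trivial, hxX, hFv⟩
    have hyst : stP y := hnst y (Or.inl hyn)
    obtain ⟨p, -, hpf, hOP⟩ := hFv
    obtain ⟨hpst, hOPst⟩ := hH.pair_down (hXS x hxX) hyst hOP
    exact ⟨hyst, p, hpst, hpf, hOPst⟩
  have hfval_up : ∀ x y, stP x → stP y → FValIn mem stP f x y →
      FValIn mem TrueC f x y := by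
    rintro x y hx hy ⟨p, hpst, hpf, hOPst⟩
    exact ⟨p, trivial, hpf, hH.pair_up hpst hx hy hOPst⟩
  refine ⟨hXst, n, hnst n (Or.inr rfl), hH.hnat_snat hnat, f, hfst, ⟨?_, ?_, ?_⟩, ?_, ?_⟩
  · intro p hpst hpf
    obtain ⟨x, y, -, -, hxX, hOP⟩ := hfun.1 p trivial hpf
    have hyn : mem y n := (hsur y trivial).2 ⟨x, trivial, hxX, p, trivial, hpf, hOP⟩
    exact ⟨x, y, hXS x hxX, hnst y (Or.inl hyn), hxX,
      (hH.pair_down (hXS x hxX) (hnst y (Or.inl hyn)) hOP).2⟩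
  · intro x hxst hxX
    obtain ⟨y, -, hFv⟩ := hfun.2.1 x trivial hxX
    obtain ⟨hyst, hFvst⟩ := hfval_down x y hxX hFv
    exact ⟨y, hyst, hFvst⟩
  · intro x y y' hxst hyst hy'st h1 h2
    exact hfun.2.2 x y y' trivial trivial trivial
      (hfval_up x y hxst hyst h1) (hfval_up x y' hxst hy'st h2)
  · intro a b w hast hbst hwst h1 h2
    exact hinj a b w trivial trivial trivial
      (hfval_up a w hast hwst h1) (hfval_up b w hbst hwst h2)
  · intro w hwst
    constructor
    · intro hwn
      obtain ⟨a, -, haX, hFv⟩ := (hsur w trivial).1 hwn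
      exact ⟨a, hXS a haX, haX, (hfval_down a w haX hFv).2⟩
    · rintro ⟨a, hast, haX, hFvst⟩
      exact (hsur w trivial).2 ⟨a, trivial, haX, hfval_up a w hast hwst hFvst⟩

end Dir2b

/-- In any model of HST: every standard S-finite set has only
standard elements; conversely, every finite set of standard sets is standard
and S-finite. (`FiniteIn mem stP` is finiteness relativized to the standard
universe; `FiniteIn mem TrueC` is finiteness in the sense of the model.) -/
theorem standard_finite_sets {M : Type u} (mem : M → M → Prop) (stP : M → Prop)
    (hH : HSTModel mem stP) :
    (∀ X, stP X → FiniteIn mem stP X → ∀ y, mem y X → stP y) ∧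
    (∀ X, (∀ y, mem y X → stP y) → FiniteIn mem TrueC X →
      (stP X ∧ FiniteIn mem stP X)) := by
  constructor
  · rintro X hX ⟨n, hn, hnat, f, hf, hfun, hinj, hsur⟩ y hy
    exact hH.dir1 hX hn hf hnat hfun hinj hsur y hy
  · rintro X hXS ⟨n, -, hnat, f, -, hfun, hinj, hsur⟩
    exact hH.dir2 hXS hnat hfun hinj hsur

end HSTF
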